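/- arXiv:1604.01654 — 12 statements merged into one kernel-verified Lean document; each statement's English description precedes it below -/
import Mathlib

section
/- Let A : ℝ^n → ℝ^m be a continuous linear map, b ∈ ℝ^m, and let G(y) = g(A y + b). Then u ∈ ℝ^n is a subgradient of G at y₀ if and only if there exists a subgradient v of g at A y₀ + b such that u = A* v, where A* is the adjoint of A. -/
/-!
The converse direction is the adjoint identity `⟪A* v, w - y₀⟫ = ⟪v, A w - A y₀⟫`. The forward
direction is Hahn–Banach. For convex `g` the one-sided directional derivative `g'(x; ·)` at
`x = A y₀ + b` is a finite sublinear functional with `g'(x; z) ≤ g (x + z) - g x`. A subgradient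
`u` of `G` satisfies `⟪u, w⟫ ≤ g'(x; A w)`, so `⟪u, ·⟫` vanishes on `ker A` and defines a
functional on `range A` dominated by `g'(x; ·)`. Its Hahn–Banach extension `ψ` is represented
by some `v`, which is then a subgradient of `g` at `x` with `A* v = u`.
-/

open Set

open scoped RealInnerProductSpace

section DirDeriv

variable {E : Type*} [AddCommGroup E] [Module ℝ E] {f : E → ℝ}

/-- `f'(x; z)`. For convex `f` the difference quotients are bounded below, so this infimum is not
the junk value of an unbounded `iInf`. -/
noncomputable def rightDirDeriv (f : E → ℝ) (x z : E) : ℝ :=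
  ⨅ t : Ioi (0 : ℝ), (f (x + (t : ℝ) • z) - f x) / t

theorem ConvexOn.sub_le_div_sub (hf : ConvexOn ℝ univ f) (x z : E) {t : ℝ} (ht : 0 < t) :
    f x - f (x - z) ≤ (f (x + t • z) - f x) / t := by
  have hx : (t / (1 + t)) • (x - z) + (1 / (1 + t)) • (x + t • z) = x := by
    match_scalars <;> field_simp <;> ring
  have key : f ((t / (1 + t)) • (x - z) + (1 / (1 + t)) • (x + t • z)) ≤
      (t / (1 + t)) • f (x - z) + (1 / (1 + t)) • f (x + t • z) :=
    hf.2 (mem_univ _) (mem_univ _) (by positivity) (by positivity) (by field_simp; ring)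
  rw [hx, smul_eq_mul, smul_eq_mul] at key
  rw [le_div_iff₀ ht]
  field_simp at key
  linarith

theorem ConvexOn.rightDirDeriv_le (hf : ConvexOn ℝ univ f) (x z : E) {t : ℝ} (ht : 0 < t) :
    rightDirDeriv f x z ≤ (f (x + t • z) - f x) / t :=
  ciInf_le (f := fun s : Ioi (0 : ℝ) => (f (x + (s : ℝ) • z) - f x) / s)
    ⟨f x - f (x - z), by rintro _ ⟨s, rfl⟩; exact hf.sub_le_div_sub x z s.2⟩ ⟨t, ht⟩

theorem le_rightDirDeriv {x z : E} {c : ℝ} (h : ∀ t : ℝ, 0 < t → c ≤ (f (x + t • z) - f x) / t) :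
    c ≤ rightDirDeriv f x z :=
  have : Nonempty (Ioi (0 : ℝ)) := nonempty_Ioi_subtype
  le_ciInf fun t => h t t.2

theorem ConvexOn.rightDirDeriv_smul (hf : ConvexOn ℝ univ f) (x z : E) {c : ℝ} (hc : 0 < c) :
    rightDirDeriv f x (c • z) = c * rightDirDeriv f x z := by
  have hq : ∀ t : ℝ, 0 < t →
      (f (x + t • c • z) - f x) / t = c * ((f (x + (t * c) • z) - f x) / (t * c)) := by
    intro t ht
    rw [smul_smul]
    field_simp
  apply le_antisymm
  · rw [← div_le_iff₀' hc]
    refine le_rightDirDeriv fun t ht => ?_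
    have := hq (t / c) (div_pos ht hc)
    rw [div_mul_cancel₀ _ hc.ne'] at this
    rw [div_le_iff₀' hc, ← this]
    exact hf.rightDirDeriv_le x (c • z) (div_pos ht hc)
  · refine le_rightDirDeriv fun t ht => ?_
    rw [hq t ht]
    exact mul_le_mul_of_nonneg_left (hf.rightDirDeriv_le x z (mul_pos ht hc)) hc.le

/-- With `1 / t = 1 / s + 1 / r`, the point `x + t • (y + z)` is a convex combination of
`x + s • y` and `x + r • z`. -/
theorem ConvexOn.div_sub_add_le (hf : ConvexOn ℝ univ f) (x y z : E) {s r : ℝ} (hs : 0 < s)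
    (hr : 0 < r) :
    (f (x + (s * r / (s + r)) • (y + z)) - f x) / (s * r / (s + r)) ≤
      (f (x + s • y) - f x) / s + (f (x + r • z) - f x) / r := by
  have hx : (r / (s + r)) • (x + s • y) + (s / (s + r)) • (x + r • z) =
      x + (s * r / (s + r)) • (y + z) := by
    match_scalars <;> field_simp
    ring
  have key : f ((r / (s + r)) • (x + s • y) + (s / (s + r)) • (x + r • z)) ≤
      (r / (s + r)) • f (x + s • y) + (s / (s + r)) • f (x + r • z) :=
    hf.2 (mem_univ _) (mem_univ _) (by positivity) (by positivity) (by field_simp; ring)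
  rw [hx, smul_eq_mul, smul_eq_mul] at key
  rw [div_add_div _ _ hs.ne' hr.ne', div_le_div_iff₀ (by positivity) (by positivity)]
  field_simp at key ⊢
  linarith

theorem ConvexOn.rightDirDeriv_add_le (hf : ConvexOn ℝ univ f) (x y z : E) :
    rightDirDeriv f x (y + z) ≤ rightDirDeriv f x y + rightDirDeriv f x z := by
  rw [← sub_le_iff_le_add']
  refine le_rightDirDeriv fun r hr => ?_
  rw [sub_le_comm]
  refine le_rightDirDeriv fun s hs => ?_
  rw [sub_le_iff_le_add]
  exact (hf.rightDirDeriv_le x _ (by positivity)).trans (hf.div_sub_add_le x y z hs hr)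

theorem ConvexOn.rightDirDeriv_sub_le (hf : ConvexOn ℝ univ f) (x y : E) :
    rightDirDeriv f x (y - x) ≤ f y - f x := by
  simpa using hf.rightDirDeriv_le x (y - x) one_pos

end DirDeriv

section HahnBanach

variable {E F : Type*} [AddCommGroup E] [Module ℝ E] [AddCommGroup F] [Module ℝ F]

/-- Hahn–Banach, with the sublinear functional `rightDirDeriv f x` as the dominating function. -/
theorem ConvexOn.exists_comp_eq_of_le_sub {f : F → ℝ} (hf : ConvexOn ℝ univ f) (A : E →ₗ[ℝ] F)
    (φ : E →ₗ[ℝ] ℝ) (x : F) (h : ∀ w, φ w ≤ f (x + A w) - f x) :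
    ∃ ψ : F →ₗ[ℝ] ℝ, ψ.comp A = φ ∧ ∀ y, ψ (y - x) ≤ f y - f x := by
  have hφ : ∀ w, φ w ≤ rightDirDeriv f x (A w) := fun w => le_rightDirDeriv fun t ht => by
    have := h (t • w)
    rw [map_smul, map_smul, smul_eq_mul] at this
    rw [le_div_iff₀' ht]
    linarith
  have hker : LinearMap.ker A ≤ LinearMap.ker φ := by
    intro w hw
    rw [LinearMap.mem_ker] at hw ⊢
    have h0 : rightDirDeriv f x 0 ≤ 0 := by simpa using hf.rightDirDeriv_le x 0 one_pos
    have h1 := hφ w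
    have h2 := hφ (-w)
    rw [hw] at h1
    rw [map_neg, map_neg, hw, neg_zero] at h2
    linarith
  let φA : LinearMap.range A →ₗ[ℝ] ℝ :=
    ((LinearMap.ker A).liftQ φ hker).comp A.quotKerEquivRange.symm.toLinearMap
  have hφA : ∀ w, φA ⟨A w, LinearMap.mem_range_self A w⟩ = φ w := fun w => by
    simp only [φA, LinearMap.comp_apply, LinearEquiv.coe_toLinearMap,
      LinearMap.quotKerEquivRange_symm_apply_image]
    rfl
  obtain ⟨ψ, hψA, hψ⟩ := exists_extension_of_le_sublinear ⟨LinearMap.range A, φA⟩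
    (rightDirDeriv f x) (fun c hc z => hf.rightDirDeriv_smul x z hc) (hf.rightDirDeriv_add_le x)
    (by rintro ⟨_, w, rfl⟩; exact (hφA w).trans_le (hφ w))
  refine ⟨ψ, LinearMap.ext fun w => ?_, fun y => (hψ _).trans (hf.rightDirDeriv_sub_le x y)⟩
  exact (hψA ⟨A w, LinearMap.mem_range_self A w⟩).trans (hφA w)

end HahnBanach

section Subgradient

variable {E F : Type*} [NormedAddCommGroup E] [InnerProductSpace ℝ E]
  [NormedAddCommGroup F] [InnerProductSpace ℝ F]

def HasSubgradientAt (f : F → ℝ) (v x : F) : Prop :=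
  ∀ w, f w ≥ f x + ⟪v, w - x⟫

theorem exists_inner_eq_of_linearMap [FiniteDimensional ℝ F] (ψ : F →ₗ[ℝ] ℝ) :
    ∃ v : F, ∀ z, ⟪v, z⟫ = ψ z :=
  ⟨(InnerProductSpace.toDual ℝ F).symm (LinearMap.toContinuousLinearMap ψ),
    fun _ => InnerProductSpace.toDual_symm_apply⟩

theorem hasSubgradientAt_comp_affine_iff [CompleteSpace E] [FiniteDimensional ℝ F] {g : F → ℝ}
    (hg : ConvexOn ℝ univ g) (A : E →L[ℝ] F) (b : F) (y u : E) :
    HasSubgradientAt (fun w => g (A w + b)) u y ↔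
      ∃ v, HasSubgradientAt g v (A y + b) ∧ u = ContinuousLinearMap.adjoint A v := by
  constructor
  · intro h
    obtain ⟨ψ, hψA, hψ⟩ := hg.exists_comp_eq_of_le_sub A.toLinearMap (innerₛₗ ℝ u) (A y + b)
      fun w => by
        have : g (A (y + w) + b) ≥ g (A y + b) + ⟪u, y + w - y⟫ := h (y + w)
        rw [add_sub_cancel_left, map_add, add_right_comm] at this
        exact le_sub_iff_add_le'.mpr this
    obtain ⟨v, hv⟩ := exists_inner_eq_of_linearMap ψ
    refine ⟨v, fun w => ?_, ext_inner_right ℝ fun w => ?_⟩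
    · linarith [hv (w - (A y + b)), hψ w]
    · rw [ContinuousLinearMap.adjoint_inner_left, hv]
      exact (LinearMap.congr_fun hψA w).symm
  · rintro ⟨v, hv, rfl⟩ w
    have := hv (A w + b)
    rwa [add_sub_add_right_eq_sub, ← map_sub, ← ContinuousLinearMap.adjoint_inner_left] at this

end Subgradient

theorem stmt_1_general {n m : ℕ}
    (g : EuclideanSpace ℝ (Fin m) → ℝ)
    (hg : ConvexOn ℝ Set.univ g)
    (A : EuclideanSpace ℝ (Fin n) →L[ℝ] EuclideanSpace ℝ (Fin m))
    (b : EuclideanSpace ℝ (Fin m))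
    (y₀ u : EuclideanSpace ℝ (Fin n)) :
    (∀ w, g (A w + b) ≥ g (A y₀ + b) + ⟪u, w - y₀⟫) ↔
      ∃ v : EuclideanSpace ℝ (Fin m),
        (∀ w, g w ≥ g (A y₀ + b) + ⟪v, w - (A y₀ + b)⟫) ∧
        u = ContinuousLinearMap.adjoint A v :=
  hasSubgradientAt_comp_affine_iff hg A b y₀ u

/-- `u` is a subgradient of `G : y ↦ g (A y + b)` at `y₀` iff `u = A* v` for some
subgradient `v` of `g` at `A y₀ + b`. -/
theorem stmt_1 {n m : ℕ}
    (g : EuclideanSpace ℝ (Fin m) → ℝ)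
    (hg : ConvexOn ℝ Set.univ g) (hgc : Continuous g)
    (A : EuclideanSpace ℝ (Fin n) →L[ℝ] EuclideanSpace ℝ (Fin m))
    (b : EuclideanSpace ℝ (Fin m))
    (y₀ u : EuclideanSpace ℝ (Fin n)) :
    (∀ w, g (A w + b) ≥ g (A y₀ + b) + ⟪u, w - y₀⟫) ↔
      ∃ v : EuclideanSpace ℝ (Fin m),
        (∀ w, g w ≥ g (A y₀ + b) + ⟪v, w - (A y₀ + b)⟫) ∧
        u = ContinuousLinearMap.adjoint A v :=
  stmt_1_general g hg A b y₀ u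
end

section
/- Let S ⊆ ℝ^n be compact. Then there exists μ̄ > 0 such that for every x ∈ S and every μ ≥ μ̄, the minimizer y = p_μ(x) satisfies g(F(y)) ≤ h(x,y) + (μ/2)‖y − x‖². -/
/-! For `μ ≥ 1` the proximal steps `p μ x - x`, `x ∈ S`, are uniformly bounded: a convex `g` lies
above `g 0 - L‖·‖`, so the model decreases at most linearly in `‖y - x‖` while the quadratic term
grows quadratically. Hence `x` and `y = p μ x` stay in a fixed ball, on which `∇F` is `K`-Lipschitz,
and `g` is `L`-Lipschitz on the compact set of all linearizations over that ball. Taylor's estimate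
`‖F y - (F x + ∇F x (y - x))‖ ≤ K‖y - x‖²` then shows that `g (F y)` exceeds the model value by at
most `L K ‖y - x‖²`, which `μ/2 ‖y - x‖²` absorbs once `μ ≥ 2 L K`. -/

open Metric Set

section

variable {E G : Type*} [NormedAddCommGroup E] [NormedSpace ℝ E] [NormedAddCommGroup G]
  [NormedSpace ℝ G]

lemma le_one_add_of_half_mul_sq_le {μ a b c t : ℝ} (hμ : 1 ≤ μ) (ht : 0 ≤ t)
    (h : μ / 2 * t ^ 2 ≤ a + b * t + μ / 2 * c) : t ≤ 1 + 2 * |a| + 2 * |b| + |c| := by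
  have ha := le_abs_self a
  have hb := le_abs_self b
  have hc := le_abs_self c
  have hsq : t ^ 2 ≤ 2 * |a| + 2 * |b| * t + |c| := by
    rcases le_or_gt (t ^ 2) c with htc | htc
    · nlinarith [abs_nonneg a, abs_nonneg b, mul_nonneg (abs_nonneg b) ht]
    · nlinarith [mul_nonneg (sub_nonneg.2 hμ) (sub_nonneg.2 htc.le), mul_nonneg (abs_nonneg b) ht]
  rcases le_or_gt t 1 with ht1 | ht1
  · linarith [abs_nonneg a, abs_nonneg b, abs_nonneg c]
  · nlinarith [abs_nonneg a, abs_nonneg b, abs_nonneg c]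

lemma ConvexOn.sub_mul_norm_le {g : E → ℝ} {L : NNReal} (hg : ConvexOn ℝ univ g)
    (hL : LipschitzOnWith L g (closedBall 0 1)) (v : E) : g 0 - L * ‖v‖ ≤ g v := by
  have h0 : (0 : E) ∈ closedBall (0 : E) 1 := by simp
  have near : ∀ u ∈ closedBall (0 : E) 1, g 0 - L * ‖u‖ ≤ g u := fun u hu => by
    have := hL.dist_le_mul 0 h0 u hu
    rw [dist_zero_left, Real.dist_eq] at this
    linarith [le_abs_self (g 0 - g u)]
  rcases le_or_gt ‖v‖ 1 with hv | hv
  · exact near v (by simpa using hv)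
  set c := ‖v‖
  have hc : 0 < c := by linarith
  have hu : ‖c⁻¹ • v‖ = 1 := by simp [c, norm_smul, hc.ne']
  have hconv : g (c⁻¹ • v) ≤ c⁻¹ * g v + (1 - c⁻¹) * g 0 := by
    simpa using hg.2 (mem_univ v) (mem_univ 0) (by positivity)
      (sub_nonneg.2 (inv_le_one_of_one_le₀ hv.le)) (add_sub_cancel _ _)
  have hnear := near (c⁻¹ • v) (by simp [hu])
  rw [hu, mul_one] at hnear
  have : c * (c⁻¹ * g v + (1 - c⁻¹) * g 0) = g v + (c - 1) * g 0 := by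
    field_simp
  nlinarith [mul_le_mul_of_nonneg_left (hnear.trans hconv) hc.le]

lemma norm_sub_sub_fderiv_le_of_lipschitzOnWith {f : E → G} {s : Set E} {K : NNReal}
    (hs : Convex ℝ s) (hf : ∀ z ∈ s, DifferentiableAt ℝ f z) (hK : LipschitzOnWith K (fderiv ℝ f) s)
    {x y : E} (hx : x ∈ s) (hy : y ∈ s) :
    ‖f y - f x - fderiv ℝ f x (y - x)‖ ≤ K * ‖y - x‖ ^ 2 := by
  have hx' : x ∈ s ∩ closedBall x ‖y - x‖ := ⟨hx, mem_closedBall_self (norm_nonneg _)⟩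
  have hy' : y ∈ s ∩ closedBall x ‖y - x‖ := ⟨hy, by simp [dist_eq_norm]⟩
  calc ‖f y - f x - fderiv ℝ f x (y - x)‖ ≤ K * ‖y - x‖ * ‖y - x‖ :=
        (hs.inter (convex_closedBall x _)).norm_image_sub_le_of_norm_hasFDerivWithin_le'
          (fun z hz => (hf z hz.1).hasFDerivAt.hasFDerivWithinAt)
          (fun z hz => by
            rw [← dist_eq_norm]
            exact (hK.dist_le_mul z hz.1 x hx).trans
              (mul_le_mul_of_nonneg_left (mem_closedBall.1 hz.2) K.coe_nonneg))
          hx' hy'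
    _ = K * ‖y - x‖ ^ 2 := by ring

noncomputable def linearization (F : E → G) (x y : E) : G := F x + fderiv ℝ F x (y - x)

lemma linearization_self (F : E → G) (x : E) : linearization F x x = F x := by
  simp [linearization]

lemma continuous_linearization {F : E → G} (hF : ContDiff ℝ 1 F) :
    Continuous fun q : E × E => linearization F q.1 q.2 :=
  (hF.continuous.comp continuous_fst).add
    (((hF.continuous_fderiv one_ne_zero).comp continuous_fst).clm_apply
      (continuous_snd.sub continuous_fst))

lemma norm_linearization_le (F : E → G) (x y : E) :
    ‖linearization F x y‖ ≤ ‖F x‖ + ‖fderiv ℝ F x‖ * ‖y - x‖ :=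
  (norm_add_le _ _).trans (add_le_add_right ((fderiv ℝ F x).le_opNorm _) _)

lemma exists_norm_sub_le_of_prox_objective_le [FiniteDimensional ℝ G] {F : E → G} {g : G → ℝ}
    {S : Set E} (hF : ContDiff ℝ 1 F) (hg : ConvexOn ℝ univ g) (hS : IsCompact S) (d : E) :
    ∃ R, ∀ x ∈ S, ∀ μ, 1 ≤ μ → ∀ y,
      g (linearization F x y) + μ / 2 * ‖y - x‖ ^ 2 ≤
        g (linearization F x d) + μ / 2 * ‖d - x‖ ^ 2 → ‖y - x‖ ≤ R := by
  obtain ⟨L, hL⟩ := hg.locallyLipschitz.locallyLipschitzOn.exists_lipschitzOnWith_of_compact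
    (isCompact_closedBall (0 : G) 1)
  have hmodel : Continuous fun x => g (linearization F x d) :=
    hg.locallyLipschitz.continuous.comp
      ((continuous_linearization hF).comp (continuous_id.prodMk continuous_const))
  obtain ⟨A, hA⟩ := hS.exists_bound_of_continuousOn hmodel.continuousOn
  obtain ⟨MF, hMF⟩ := hS.exists_bound_of_continuousOn hF.continuous.continuousOn
  obtain ⟨MJ, hMJ⟩ :=
    hS.exists_bound_of_continuousOn (hF.continuous_fderiv one_ne_zero).continuousOn
  obtain ⟨Md, hMd⟩ := hS.exists_bound_of_continuousOn (f := fun x => ‖d - x‖ ^ 2) (by fun_prop)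
  refine ⟨1 + 2 * |A - g 0 + L * MF| + 2 * |L * MJ| + |Md|, fun x hx μ hμ y hy => ?_⟩
  refine le_one_add_of_half_mul_sq_le hμ (norm_nonneg _) ?_
  set t := ‖y - x‖
  have hlin : ‖linearization F x y‖ ≤ MF + MJ * t :=
    (norm_linearization_le F x y).trans
      (add_le_add (hMF x hx) (mul_le_mul_of_nonneg_right (hMJ x hx) (norm_nonneg _)))
  have hlow : g 0 - L * (MF + MJ * t) ≤ g (linearization F x y) :=
    (hg.sub_mul_norm_le hL _).trans' (by gcongr)
  have hup : g (linearization F x d) ≤ A := (le_abs_self _).trans (hA x hx)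
  have hdist : μ / 2 * ‖d - x‖ ^ 2 ≤ μ / 2 * Md := by
    gcongr
    exact (le_abs_self _).trans (hMd x hx)
  linarith

lemma le_linearization_add_of_lipschitzOnWith {F : E → G} {g : G → ℝ} {s : Set E} {T : Set G}
    {K L : NNReal} (hs : Convex ℝ s) (hF : ∀ z ∈ s, DifferentiableAt ℝ F z)
    (hK : LipschitzOnWith K (fderiv ℝ F) s) (hL : LipschitzOnWith L g T)
    (hT : ∀ x ∈ s, ∀ y ∈ s, linearization F x y ∈ T) {x y : E} (hx : x ∈ s) (hy : y ∈ s)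
    {μ : ℝ} (hμ : 2 * L * K ≤ μ) :
    g (F y) ≤ g (linearization F x y) + μ / 2 * ‖y - x‖ ^ 2 := by
  have hFy : F y ∈ T := linearization_self F y ▸ hT y hy y hy
  have hgdist := hL.dist_le_mul _ hFy _ (hT x hx y hy)
  rw [Real.dist_eq, dist_eq_norm] at hgdist
  have htaylor : ‖F y - linearization F x y‖ ≤ K * ‖y - x‖ ^ 2 := by
    simpa [linearization, sub_add_eq_sub_sub] using
      norm_sub_sub_fderiv_le_of_lipschitzOnWith hs hF hK hx hy
  calc g (F y) ≤ g (linearization F x y) + L * (K * ‖y - x‖ ^ 2) := by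
        nlinarith [le_abs_self (g (F y) - g (linearization F x y)),
          mul_le_mul_of_nonneg_left htaylor L.coe_nonneg]
    _ ≤ g (linearization F x y) + μ / 2 * ‖y - x‖ ^ 2 := by
        nlinarith [mul_le_mul_of_nonneg_right hμ (sq_nonneg ‖y - x‖)]

end

theorem stmt_7_general {n m : ℕ}
    (F : EuclideanSpace ℝ (Fin n) → EuclideanSpace ℝ (Fin m))
    (g : EuclideanSpace ℝ (Fin m) → ℝ)
    (D : Set (EuclideanSpace ℝ (Fin n)))
    (hF : ContDiff ℝ 2 F)
    (hg : ConvexOn ℝ Set.univ g)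
    (hDne : D.Nonempty)
    (p : ℝ → EuclideanSpace ℝ (Fin n) → EuclideanSpace ℝ (Fin n))
    (hp : ∀ μ, 0 < μ → ∀ x, p μ x ∈ D ∧ ∀ z ∈ D,
      g (F x + fderiv ℝ F x (p μ x - x)) + μ / 2 * ‖p μ x - x‖ ^ 2 ≤
      g (F x + fderiv ℝ F x (z - x)) + μ / 2 * ‖z - x‖ ^ 2)
    (S : Set (EuclideanSpace ℝ (Fin n))) (hS : IsCompact S) :
    ∃ μbar > (0 : ℝ), ∀ x ∈ S, ∀ μ, μbar ≤ μ →
      g (F (p μ x)) ≤ g (F x + fderiv ℝ F x (p μ x - x)) + μ / 2 * ‖p μ x - x‖ ^ 2 := by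
  obtain ⟨d, hd⟩ := hDne
  have hF1 : ContDiff ℝ 1 F := hF.of_le one_le_two
  obtain ⟨R, hR⟩ := exists_norm_sub_le_of_prox_objective_le hF1 hg hS d
  obtain ⟨ρ, hSρ⟩ := hS.isBounded.subset_closedBall 0
  have hB := isCompact_closedBall (0 : EuclideanSpace ℝ (Fin n)) (ρ + R)
  obtain ⟨K, hK⟩ := (hF.fderiv_right (by norm_num)).locallyLipschitz.locallyLipschitzOn
    |>.exists_lipschitzOnWith_of_compact hB
  obtain ⟨L, hL⟩ := hg.locallyLipschitz.locallyLipschitzOn.exists_lipschitzOnWith_of_compact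
    ((hB.prod hB).image (continuous_linearization hF1))
  refine ⟨max 1 (2 * L * K), by positivity, fun x hx μ hμ => ?_⟩
  obtain ⟨-, hopt⟩ := hp μ (by linarith [le_max_left 1 (2 * L * K : ℝ)]) x
  have hstep : ‖p μ x - x‖ ≤ R := hR x hx μ (le_of_max_le_left hμ) _ (hopt d hd)
  have hx' : ‖x‖ ≤ ρ := mem_closedBall_zero_iff.1 (hSρ hx)
  have hxB : x ∈ closedBall 0 (ρ + R) := by
    rw [mem_closedBall_zero_iff]; linarith [(norm_nonneg _).trans hstep]
  have hyB : p μ x ∈ closedBall 0 (ρ + R) := by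
    rw [mem_closedBall_zero_iff]; linarith [norm_le_norm_add_norm_sub' (p μ x) x]
  exact le_linearization_add_of_lipschitzOnWith (convex_closedBall _ _)
    (fun z _ => hF1.differentiable one_ne_zero z) hK hL
    (fun x hx y hy => ⟨(x, y), ⟨hx, hy⟩, rfl⟩) hxB hyB (le_of_max_le_right hμ)

/-- For any compact `S ⊆ ℝ^n` there exists `μ̄ > 0` such that for every `x ∈ S`
and every `μ ≥ μ̄`, the minimizer `y = p_μ(x)` satisfies
`g(F(y)) ≤ h(x,y) + (μ/2)‖y - x‖²`. -/
theorem stmt_7 {n m : ℕ}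
    (F : EuclideanSpace ℝ (Fin n) → EuclideanSpace ℝ (Fin m))
    (g : EuclideanSpace ℝ (Fin m) → ℝ)
    (D : Set (EuclideanSpace ℝ (Fin n)))
    (hF : ContDiff ℝ 2 F)
    (hg : ConvexOn ℝ Set.univ g) (hgc : Continuous g)
    (hDne : D.Nonempty) (hDcl : IsClosed D) (hDcv : Convex ℝ D)
    (p : ℝ → EuclideanSpace ℝ (Fin n) → EuclideanSpace ℝ (Fin n))
    (hp : ∀ μ, 0 < μ → ∀ x, p μ x ∈ D ∧ ∀ z ∈ D,
      g (F x + fderiv ℝ F x (p μ x - x)) + μ / 2 * ‖p μ x - x‖ ^ 2 ≤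
      g (F x + fderiv ℝ F x (z - x)) + μ / 2 * ‖z - x‖ ^ 2)
    (S : Set (EuclideanSpace ℝ (Fin n))) (hS : IsCompact S) :
    ∃ μbar > (0 : ℝ), ∀ x ∈ S, ∀ μ, μbar ≤ μ →
      g (F (p μ x)) ≤ g (F x + fderiv ℝ F x (p μ x - x)) + μ / 2 * ‖p μ x - x‖ ^ 2 :=
  stmt_7_general F g D hF hg hDne p hp S hS
end

section
/- Let S ⊆ ℝ^n be bounded and μ₀ > 0. Then the set { p_μ(x) : x ∈ S, μ ≥ μ₀ } is bounded. -/
/-!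
A convex continuous function decreases at most linearly: `g v ≥ -c (1 + ‖v‖)`. Testing the
subproblem at `x` against a fixed `z₀ ∈ D` then gives, with `t = ‖p_μ(x) - x‖`,
`μ/2 t² ≤ a + b t + μ/2 ‖z₀ - x‖²`, where `a, b` are uniform over `x ∈ S` because `F` and `∇F`
are bounded on the compact closure of `S`. For `μ ≥ μ₀` the quadratic term dominates, so the
steps `p_μ(x) - x`, and hence the points `p_μ(x)`, stay bounded.
-/

open Bornology Metric Set

lemma le_of_half_mul_sq_le {μ₀ μ a b R t : ℝ} (hμ₀ : 0 < μ₀) (hμ : μ₀ ≤ μ)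
    (h : μ / 2 * t ^ 2 ≤ a + b * t + μ / 2 * R ^ 2) :
    t ≤ 1 + |R| + R ^ 2 + 2 * (|a| + |b|) / μ₀ := by
  have hab : 0 ≤ 2 * (|a| + |b|) / μ₀ := by positivity
  rcases le_or_gt t |R| with htR | hRt
  · nlinarith [sq_nonneg R]
  rcases le_or_gt t 1 with ht1 | h1t
  · nlinarith [abs_nonneg R, sq_nonneg R]
  have hsq : R ^ 2 ≤ t ^ 2 := by nlinarith [sq_abs R, abs_nonneg R]
  have hμ_lower : μ₀ / 2 * (t ^ 2 - R ^ 2) ≤ (|a| + |b|) * t := by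
    nlinarith [le_abs_self a, le_abs_self b, neg_abs_le b, abs_nonneg a]
  have hdiv_t : μ₀ * t ≤ μ₀ * R ^ 2 + 2 * (|a| + |b|) := by
    by_contra! hlt
    nlinarith [mul_lt_mul_of_pos_right hlt (one_pos.trans h1t),
      mul_nonneg (sub_nonneg.mpr h1t.le) (mul_nonneg hμ₀.le (sq_nonneg R))]
  have ht_le : t ≤ R ^ 2 + 2 * (|a| + |b|) / μ₀ := by
    rw [← sub_le_iff_le_add', le_div_iff₀ hμ₀]; linarith
  linarith [abs_nonneg R]

theorem ConvexOn.exists_lower_bound_one_add_norm {E : Type*} [NormedAddCommGroup E]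
    [NormedSpace ℝ E] [ProperSpace E] {g : E → ℝ} (hg : ConvexOn ℝ univ g) (hgc : Continuous g) :
    ∃ c, 0 ≤ c ∧ ∀ v, -(c * (1 + ‖v‖)) ≤ g v := by
  obtain ⟨C, hC⟩ := (isCompact_closedBall (0 : E) 1).exists_bound_of_continuousOn
    hgc.continuousOn
  have hC_ball : ∀ v, ‖v‖ ≤ 1 → -C ≤ g v ∧ g v ≤ C := fun v hv ↦
    abs_le.mp (hC v (by simpa using hv))
  have hC0 : 0 ≤ C := (norm_nonneg _).trans (hC 0 (by simp))
  refine ⟨2 * C, by positivity, fun v ↦ ?_⟩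
  rcases le_or_gt ‖v‖ 1 with hv | hv
  · nlinarith [(hC_ball v hv).1, norm_nonneg v]
  set r := ‖v‖
  have hr : 0 < r := one_pos.trans hv
  have hcvx : g (r⁻¹ • v) ≤ r⁻¹ * g v + (1 - r⁻¹) * g 0 := by
    simpa using hg.2 (mem_univ v) (mem_univ 0) (inv_nonneg.mpr hr.le)
      (sub_nonneg.mpr (inv_le_one_of_one_le₀ hv.le)) (add_sub_cancel _ _)
  have hu : -C ≤ g (r⁻¹ • v) :=
    (hC_ball _ (by rw [norm_smul, norm_inv, norm_norm, inv_mul_cancel₀ hr.ne'])).1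
  have hmul : r * g (r⁻¹ • v) ≤ g v + (r - 1) * g 0 :=
    calc r * g (r⁻¹ • v) ≤ r * (r⁻¹ * g v + (1 - r⁻¹) * g 0) :=
          mul_le_mul_of_nonneg_left hcvx hr.le
      _ = g v + (r - 1) * g 0 := by field_simp
  nlinarith [(hC_ball 0 (by simp)).2]

theorem isBounded_range_of_prox_le {ι E F : Type*} [NormedAddCommGroup E] [NormedSpace ℝ E]
    [NormedAddCommGroup F] [NormedSpace ℝ F] [ProperSpace F] {g : F → ℝ}
    (hg : ConvexOn ℝ univ g) (hgc : Continuous g) {b : ι → F} {A : ι → E →L[ℝ] F}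
    {z d : ι → E} {μ : ι → ℝ} {μ₀ : ℝ} (hb : IsBounded (range b)) (hA : IsBounded (range A))
    (hz : IsBounded (range z)) (hμ₀ : 0 < μ₀) (hμ : ∀ i, μ₀ ≤ μ i)
    (hd : ∀ i, g (b i + A i (d i)) + μ i / 2 * ‖d i‖ ^ 2 ≤
      g (b i + A i (z i)) + μ i / 2 * ‖z i‖ ^ 2) :
    IsBounded (range d) := by
  obtain ⟨c, hc, hg_lower⟩ := hg.exists_lower_bound_one_add_norm hgc
  obtain ⟨Mb, hMb⟩ := isBounded_iff_forall_norm_le.mp hb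
  obtain ⟨MA, hMA⟩ := isBounded_iff_forall_norm_le.mp hA
  obtain ⟨R, hR⟩ := isBounded_iff_forall_norm_le.mp hz
  obtain ⟨Mg, hMg⟩ := (isCompact_closedBall (0 : F) (Mb + MA * R)).exists_bound_of_continuousOn
    hgc.continuousOn
  have hlin : ∀ i v, ‖b i + A i v‖ ≤ Mb + MA * ‖v‖ := fun i v ↦
    (norm_add_le _ _).trans
      (add_le_add (hMb _ ⟨i, rfl⟩) ((A i).le_of_opNorm_le (hMA _ ⟨i, rfl⟩) v))
  refine isBounded_iff_forall_norm_le.mpr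
    ⟨1 + |R| + R ^ 2 + 2 * (|Mg + c * (1 + Mb)| + |c * MA|) / μ₀, ?_⟩
  rintro _ ⟨i, rfl⟩
  have hzi : ‖z i‖ ≤ R := hR _ ⟨i, rfl⟩
  have hMA0 : 0 ≤ MA := (norm_nonneg _).trans (hMA _ ⟨i, rfl⟩)
  have hgz : g (b i + A i (z i)) ≤ Mg := by
    refine (abs_le.mp (hMg _ ?_)).2
    simpa using (hlin i (z i)).trans (by gcongr)
  have hgd : -(c * (1 + Mb) + c * MA * ‖d i‖) ≤ g (b i + A i (d i)) := by
    refine le_trans ?_ (hg_lower _)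
    nlinarith [mul_le_mul_of_nonneg_left (hlin i (d i)) hc]
  have hzsq : μ i / 2 * ‖z i‖ ^ 2 ≤ μ i / 2 * R ^ 2 := by
    have hμi : 0 < μ i := hμ₀.trans_le (hμ i)
    gcongr
  exact le_of_half_mul_sq_le hμ₀ (hμ i) (by linarith [hd i])

theorem stmt_8_general {n m : ℕ}
    (F : EuclideanSpace ℝ (Fin n) → EuclideanSpace ℝ (Fin m))
    (g : EuclideanSpace ℝ (Fin m) → ℝ)
    (D : Set (EuclideanSpace ℝ (Fin n)))
    (hF : ContDiff ℝ 2 F)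
    (hg : ConvexOn ℝ Set.univ g) (hgc : Continuous g)
    (hDne : D.Nonempty)
    (p : ℝ → EuclideanSpace ℝ (Fin n) → EuclideanSpace ℝ (Fin n))
    (hp : ∀ μ, 0 < μ → ∀ x, p μ x ∈ D ∧ ∀ z ∈ D,
      g (F x + fderiv ℝ F x (p μ x - x)) + μ / 2 * ‖p μ x - x‖ ^ 2 ≤
      g (F x + fderiv ℝ F x (z - x)) + μ / 2 * ‖z - x‖ ^ 2)
    (S : Set (EuclideanSpace ℝ (Fin n))) (hS : Bornology.IsBounded S)
    (μ₀ : ℝ) (hμ₀ : 0 < μ₀) :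
    Bornology.IsBounded {y | ∃ x ∈ S, ∃ μ, μ₀ ≤ μ ∧ y = p μ x} := by
  obtain ⟨z₀, hz₀⟩ := hDne
  let ι := {q : EuclideanSpace ℝ (Fin n) × ℝ // q.1 ∈ S ∧ μ₀ ≤ q.2}
  have himage {G : Type} [PseudoMetricSpace G] {f : EuclideanSpace ℝ (Fin n) → G}
      (hf : Continuous f) : IsBounded (range fun q : ι ↦ f q.1.1) :=
    ((hS.isCompact_closure.image hf).isBounded).subset
      (by rintro _ ⟨q, rfl⟩; exact mem_image_of_mem f (subset_closure q.2.1))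
  have hsteps : IsBounded (range fun q : ι ↦ p q.1.2 q.1.1 - q.1.1) :=
    isBounded_range_of_prox_le hg hgc (himage hF.continuous)
      (himage (hF.continuous_fderiv two_ne_zero)) (himage (continuous_sub_left z₀)) hμ₀
      (fun q ↦ q.2.2) (fun q ↦ (hp _ (hμ₀.trans_le q.2.2) _).2 z₀ hz₀)
  refine (hS.add hsteps).subset ?_
  rintro _ ⟨x, hx, μ, hμ, rfl⟩
  exact ⟨x, hx, _, ⟨⟨(x, μ), hx, hμ⟩, rfl⟩, add_sub_cancel _ _⟩

/-- If `S ⊆ ℝ^n` is bounded and `μ₀ > 0`, then the set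
`{ p_μ(x) : x ∈ S, μ ≥ μ₀ }` is bounded. -/
theorem stmt_8 {n m : ℕ}
    (F : EuclideanSpace ℝ (Fin n) → EuclideanSpace ℝ (Fin m))
    (g : EuclideanSpace ℝ (Fin m) → ℝ)
    (D : Set (EuclideanSpace ℝ (Fin n)))
    (hF : ContDiff ℝ 2 F)
    (hg : ConvexOn ℝ Set.univ g) (hgc : Continuous g)
    (hDne : D.Nonempty) (hDcl : IsClosed D) (hDcv : Convex ℝ D)
    (p : ℝ → EuclideanSpace ℝ (Fin n) → EuclideanSpace ℝ (Fin n))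
    (hp : ∀ μ, 0 < μ → ∀ x, p μ x ∈ D ∧ ∀ z ∈ D,
      g (F x + fderiv ℝ F x (p μ x - x)) + μ / 2 * ‖p μ x - x‖ ^ 2 ≤
      g (F x + fderiv ℝ F x (z - x)) + μ / 2 * ‖z - x‖ ^ 2)
    (S : Set (EuclideanSpace ℝ (Fin n))) (hS : Bornology.IsBounded S)
    (μ₀ : ℝ) (hμ₀ : 0 < μ₀) :
    Bornology.IsBounded {y | ∃ x ∈ S, ∃ μ, μ₀ ≤ μ ∧ y = p μ x} :=
  stmt_8_general F g D hF hg hgc hDne p hp S hS μ₀ hμ₀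
end

section
/- For every fixed μ > 0, the map x ↦ p_μ(x) is continuous on ℝ^n. -/
/-!
The objective `φ x z = g (F x + ∇F(x) (z - x)) + μ/2 ‖z - x‖²` is jointly continuous and
`μ`-strongly convex in `z`, so on the sphere of radius `r` around the minimizer `p x₀` it exceeds
its minimum by at least `μ r² / 4`. By compactness of the ball, for `x` near `x₀` the function
`φ x` is uniformly within `μ r² / 8` of `φ x₀` there, hence `φ x > φ x (p x₀)` on the sphere;
convexity of `φ x` along the segment from `p x₀` to `p x` then forces `p x` into the ball.
-/
open Filter Metric Set Topology Function

section NormedSpace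

variable {E : Type*} [NormedAddCommGroup E] [NormedSpace ℝ E]

lemma exists_mem_segment_norm_sub_eq {a b : E} {r : ℝ} (hr : 0 ≤ r) (hrb : r ≤ ‖b - a‖) :
    ∃ z ∈ segment ℝ a b, ‖z - a‖ = r := by
  rcases hr.eq_or_lt with rfl | hr
  · exact ⟨a, left_mem_segment ℝ a b, by simp⟩
  have hba : 0 < ‖b - a‖ := hr.trans_le hrb
  refine ⟨a + (r / ‖b - a‖) • (b - a), ?_, ?_⟩
  · rw [segment_eq_image']
    exact ⟨r / ‖b - a‖, ⟨by positivity, (div_le_one hba).2 hrb⟩, rfl⟩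
  · rw [add_sub_cancel_left, norm_smul, Real.norm_of_nonneg (by positivity),
      div_mul_cancel₀ _ hba.ne']

lemma StrongConvexOn.add_mul_sq_norm_sub_le_of_isMinOn {s : Set E} {m : ℝ} {f : E → ℝ} {q z : E}
    (hf : StrongConvexOn s m f) (hq : IsMinOn f s q) (hqs : q ∈ s) (hz : z ∈ s) :
    f q + m / 4 * ‖z - q‖ ^ 2 ≤ f z := by
  have ha : (0 : ℝ) ≤ 1 / 2 := by norm_num
  have hmid := hf.2 hqs hz ha ha (by norm_num)
  have hle := isMinOn_iff.1 hq _ (hf.1 hqs hz ha ha (by norm_num))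
  rw [norm_sub_rev] at hmid
  simp only [smul_eq_mul] at hmid
  linarith

lemma ConvexOn.add_strongConvexOn {s : Set E} {m : ℝ} {f g : E → ℝ} (hf : ConvexOn ℝ s f)
    (hg : StrongConvexOn s m g) : StrongConvexOn s m (f + g) := by
  simpa [StrongConvexOn] using (uniformConvexOn_zero.2 hf).add hg

lemma ConvexOn.comp_add_clm_sub {F : Type*} [NormedAddCommGroup F] [NormedSpace ℝ F]
    {g : F → ℝ} (hg : ConvexOn ℝ univ g) {s : Set E} (hs : Convex ℝ s) (c : F) (A : E →L[ℝ] F)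
    (x : E) :
    ConvexOn ℝ s fun z ↦ g (c + A (z - x)) := by
  refine ((hg.comp_affineMap (A.toLinearMap.toAffineMap + AffineMap.const ℝ E (c - A x))).subset
    (subset_univ _) hs).congr fun z _ ↦ ?_
  simp only [AffineMap.coe_add, LinearMap.coe_toAffineMap, ContinuousLinearMap.coe_coe,
    AffineMap.coe_const, comp_apply, Pi.add_apply, const_apply, map_sub]
  rw [add_sub_left_comm]

end NormedSpace

section InnerProductSpace

variable {E : Type*} [NormedAddCommGroup E] [InnerProductSpace ℝ E]

lemma strongConvexOn_mul_sq_norm_sub {s : Set E} (hs : Convex ℝ s) (m : ℝ) (x : E) :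
    StrongConvexOn s m fun z ↦ m / 2 * ‖z - x‖ ^ 2 := by
  rw [strongConvexOn_iff_convex]
  refine ⟨hs, fun a _ b _ s t _ _ hst ↦ le_of_eq ?_⟩
  simp only [norm_sub_sq_real, inner_add_left, real_inner_smul_left, smul_eq_mul]
  linear_combination (-(m / 2 * ‖x‖ ^ 2)) * hst

end InnerProductSpace

theorem continuous_of_isMinOn_of_strongConvexOn {X E : Type*} [TopologicalSpace X]
    [NormedAddCommGroup E] [NormedSpace ℝ E] [ProperSpace E] {φ : X → E → ℝ}
    (hφ : Continuous (uncurry φ)) {D : Set E} {c : ℝ} (hc : 0 < c)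
    (hconv : ∀ x, StrongConvexOn D c (φ x)) {p : X → E} (hpD : ∀ x, p x ∈ D)
    (hmin : ∀ x, IsMinOn (φ x) D (p x)) : Continuous p := by
  refine continuous_iff_continuousAt.2 fun x₀ ↦ Metric.tendsto_nhds.2 fun r hr ↦ ?_
  have hclose : ∀ᶠ x in 𝓝 x₀, ∀ z ∈ closedBall (p x₀) r, |φ x z - φ x₀ z| < c / 8 * r ^ 2 := by
    refine (isCompact_closedBall _ _).eventually_forall_of_forall_eventually fun z _ ↦ ?_
    have hcont : Continuous fun w : X × E ↦ φ w.1 w.2 - φ x₀ w.2 :=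
      hφ.sub (hφ.comp (continuous_const.prodMk continuous_snd))
    have hε : 0 < c / 8 * r ^ 2 := by positivity
    exact (hcont.tendsto (x₀, z)).abs.eventually (gt_mem_nhds (by simpa using hε))
  filter_upwards [hclose] with x hx
  by_contra! hfar
  rw [dist_eq_norm] at hfar
  obtain ⟨z, hzseg, hzr⟩ := exists_mem_segment_norm_sub_eq hr.le hfar
  have hzD : z ∈ D := (hconv x).1.segment_subset (hpD x₀) (hpD x) hzseg
  have hzx : φ x z ≤ φ x (p x₀) :=
    (((hconv x).convexOn (by intro; positivity)).le_on_segment (hpD x₀) (hpD x) hzseg).trans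
      (max_le le_rfl (isMinOn_iff.1 (hmin x) _ (hpD x₀)))
  have hgrowth := (hconv x₀).add_mul_sq_norm_sub_le_of_isMinOn (hmin x₀) (hpD x₀) hzD
  rw [hzr] at hgrowth
  have h₁ := abs_lt.1 (hx z (by rw [mem_closedBall, dist_eq_norm, hzr]))
  have h₂ := abs_lt.1 (hx (p x₀) (mem_closedBall_self hr.le))
  linarith

theorem stmt_9_general {n m : ℕ}
    (F : EuclideanSpace ℝ (Fin n) → EuclideanSpace ℝ (Fin m))
    (g : EuclideanSpace ℝ (Fin m) → ℝ)
    (D : Set (EuclideanSpace ℝ (Fin n)))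
    (hF : ContDiff ℝ 2 F)
    (hg : ConvexOn ℝ Set.univ g) (hgc : Continuous g)
    (hDcv : Convex ℝ D)
    (p : ℝ → EuclideanSpace ℝ (Fin n) → EuclideanSpace ℝ (Fin n))
    (hp : ∀ μ, 0 < μ → ∀ x, p μ x ∈ D ∧ ∀ z ∈ D,
      g (F x + fderiv ℝ F x (p μ x - x)) + μ / 2 * ‖p μ x - x‖ ^ 2 ≤
      g (F x + fderiv ℝ F x (z - x)) + μ / 2 * ‖z - x‖ ^ 2)
    (μ : ℝ) (hμ : 0 < μ) :
    Continuous (p μ) := by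
  set φ := fun x z ↦ g (F x + fderiv ℝ F x (z - x)) + μ / 2 * ‖z - x‖ ^ 2
  have hφ : Continuous (uncurry φ) := by
    have hDF := hF.continuous_fderiv (by norm_num)
    fun_prop
  refine continuous_of_isMinOn_of_strongConvexOn hφ hμ (fun x ↦ ?_) (fun x ↦ (hp μ hμ x).1)
    (fun x ↦ isMinOn_iff.2 (hp μ hμ x).2)
  exact (hg.comp_add_clm_sub hDcv _ _ x).add_strongConvexOn
    (strongConvexOn_mul_sq_norm_sub hDcv μ x)

/-- For every fixed `μ > 0`, the map `x ↦ p_μ(x)` is continuous on `ℝ^n`. -/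
theorem stmt_9 {n m : ℕ}
    (F : EuclideanSpace ℝ (Fin n) → EuclideanSpace ℝ (Fin m))
    (g : EuclideanSpace ℝ (Fin m) → ℝ)
    (D : Set (EuclideanSpace ℝ (Fin n)))
    (hF : ContDiff ℝ 2 F)
    (hg : ConvexOn ℝ Set.univ g) (hgc : Continuous g)
    (hDne : D.Nonempty) (hDcl : IsClosed D) (hDcv : Convex ℝ D)
    (p : ℝ → EuclideanSpace ℝ (Fin n) → EuclideanSpace ℝ (Fin n))
    (hp : ∀ μ, 0 < μ → ∀ x, p μ x ∈ D ∧ ∀ z ∈ D,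
      g (F x + fderiv ℝ F x (p μ x - x)) + μ / 2 * ‖p μ x - x‖ ^ 2 ≤
      g (F x + fderiv ℝ F x (z - x)) + μ / 2 * ‖z - x‖ ^ 2)
    (μ : ℝ) (hμ : 0 < μ) :
    Continuous (p μ) :=
  stmt_9_general F g D hF hg hgc hDcv p hp μ hμ
end

section
/- For every fixed μ > 0, the value function x ↦ V_μ(x) is continuous on ℝ^n. -/
/-!
`V_μ x` is the minimum over `y ∈ D` of the jointly continuous function
`Φ(x, y) = g(F x + ∇F(x)(y - x)) + (μ/2)‖y - x‖²`. A convex `g` on a finite-dimensional space is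
bounded below by `c - K‖·‖`, so the quadratic term confines the minimizer `p_μ x` to a ball around
`x` whose radius depends continuously on `x`. Near any `x₀` the minimizers therefore stay in one
compact subset of `D`, and the minimum of a jointly continuous function over a fixed compact set
depends continuously on the parameter.
-/

open Filter Metric Set Topology

theorem ConvexOn.sub_mul_norm_le_s10 {E : Type*} [NormedAddCommGroup E] [NormedSpace ℝ E]
    {g : E → ℝ} (hg : ConvexOn ℝ univ g) {c : ℝ} (hc : ∀ y ∈ closedBall (0 : E) 1, c ≤ g y)
    (y : E) : c - (g 0 - c) * ‖y‖ ≤ g y := by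
  have hc0 : c ≤ g 0 := hc 0 (by simp)
  rcases le_or_gt ‖y‖ 1 with hy | hy
  · have := hc y (by simpa using hy)
    nlinarith [norm_nonneg y]
  · set t := ‖y‖
    have ht : 0 < t := one_pos.trans hy
    -- `t⁻¹ • y` is a convex combination of `0` and `y` lying on the unit sphere
    have hunit : c ≤ g (t⁻¹ • y) := hc _ <| by
      rw [mem_closedBall_zero_iff, norm_smul, norm_inv, norm_norm, inv_mul_cancel₀ ht.ne']
    have hconv : g (t⁻¹ • y) ≤ (1 - t⁻¹) * g 0 + t⁻¹ * g y := by
      simpa using hg.2 (mem_univ 0) (mem_univ y)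
        (sub_nonneg.2 (inv_le_one_of_one_le₀ hy.le)) (inv_pos.2 ht).le (by ring)
    have key : t * c ≤ (t - 1) * g 0 + g y := by
      have := mul_le_mul_of_nonneg_left (hunit.trans hconv) ht.le
      rwa [mul_add, ← mul_assoc, ← mul_assoc, mul_sub, mul_inv_cancel₀ ht.ne', mul_one,
        one_mul] at this
    nlinarith

theorem ConvexOn.exists_sub_mul_norm_le {E : Type*} [NormedAddCommGroup E] [NormedSpace ℝ E]
    [FiniteDimensional ℝ E] {g : E → ℝ} (hg : ConvexOn ℝ univ g) :
    ∃ c K : ℝ, 0 ≤ K ∧ ∀ y, c - K * ‖y‖ ≤ g y := by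
  obtain ⟨y₀, -, hmin⟩ := (isCompact_closedBall (0 : E) 1).exists_isMinOn
    (nonempty_closedBall.2 zero_le_one) hg.locallyLipschitz.continuous.continuousOn
  exact ⟨g y₀, g 0 - g y₀, sub_nonneg.2 (hmin (mem_closedBall_self zero_le_one)),
    hg.sub_mul_norm_le_s10 fun y hy => hmin hy⟩

theorem le_one_add_of_mul_sq_le {a b c r : ℝ} (ha : 0 < a) (hb : 0 ≤ b)
    (h : a * r ^ 2 ≤ b * r + c) : r ≤ 1 + (b + |c|) / a := by
  have hdiv : 0 ≤ (b + |c|) / a := div_nonneg (add_nonneg hb (abs_nonneg c)) ha.le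
  rcases le_or_gt r 1 with hr1 | hr1
  · linarith
  · suffices r * a ≤ b + |c| by linarith [(le_div_iff₀ ha).2 this]
    have hc : c ≤ |c| * r := (le_abs_self c).trans (le_mul_of_one_le_right (abs_nonneg c) hr1.le)
    by_contra! hlt
    nlinarith [mul_lt_mul_of_pos_right hlt (one_pos.trans hr1)]

theorem continuousAt_of_isMinOn {X Y : Type*} [TopologicalSpace X] [TopologicalSpace Y]
    {Φ : X → Y → ℝ} (hΦ : Continuous ↿Φ) {D K : Set Y} (hK : IsCompact K) (hKD : K ⊆ D)
    {p : X → Y} (hp : ∀ x, IsMinOn (Φ x) D (p x)) {x₀ : X} (hpK : ∀ᶠ x in 𝓝 x₀, p x ∈ K) :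
    ContinuousAt (fun x => Φ x (p x)) x₀ := by
  refine (hK.continuous_sInf hΦ).continuousAt.congr ?_
  filter_upwards [hpK] with x hx
  exact IsLeast.csInf_eq ⟨mem_image_of_mem _ hx,
    forall_mem_image.2 fun _ hz => isMinOn_iff.1 (hp x) _ (hKD hz)⟩

theorem eventually_mem_closedBall_of_dist_le {X : Type*} [PseudoMetricSpace X] {p : X → X}
    {B : X → ℝ} (hB : Continuous B) (hpB : ∀ x, dist (p x) x ≤ B x) (x₀ : X) :
    ∀ᶠ x in 𝓝 x₀, p x ∈ closedBall x₀ (B x₀ + 2) := by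
  filter_upwards [ball_mem_nhds x₀ one_pos,
    hB.continuousAt.eventually_lt continuousAt_const (lt_add_one (B x₀))] with x hx hBx
  rw [mem_ball] at hx
  rw [mem_closedBall]
  linarith [dist_triangle (p x) x x₀, hpB x]

section LinearizedObjective

variable {E G : Type*} [NormedAddCommGroup E] [NormedSpace ℝ E] [NormedAddCommGroup G]
  [NormedSpace ℝ G] {F : E → G} {g : G → ℝ} {μ : ℝ}

noncomputable def linearizedObjective (F : E → G) (g : G → ℝ) (μ : ℝ) (x y : E) : ℝ :=
  g (F x + fderiv ℝ F x (y - x)) + μ / 2 * ‖y - x‖ ^ 2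

theorem continuous_linearizedObjective (hF : ContDiff ℝ 1 F) (hg : Continuous g) (μ : ℝ) :
    Continuous ↿(linearizedObjective F g μ) := by
  have hF' : Continuous (fderiv ℝ F) := hF.continuous_fderiv one_ne_zero
  unfold linearizedObjective
  fun_prop

theorem norm_sub_le_of_linearizedObjective_le {c K t : ℝ} (hgK : ∀ y, c - K * ‖y‖ ≤ g y)
    (hK : 0 ≤ K) (hμ : 0 < μ) {x y : E} (h : linearizedObjective F g μ x y ≤ t) :
    ‖y - x‖ ≤ 1 + (K * ‖fderiv ℝ F x‖ + |t - c + K * ‖F x‖|) / (μ / 2) := by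
  apply le_one_add_of_mul_sq_le (half_pos hμ) (mul_nonneg hK (norm_nonneg _))
  have hlin : ‖F x + fderiv ℝ F x (y - x)‖ ≤ ‖F x‖ + ‖fderiv ℝ F x‖ * ‖y - x‖ :=
    (norm_add_le _ _).trans (add_le_add_right ((fderiv ℝ F x).le_opNorm _) _)
  have := hgK (F x + fderiv ℝ F x (y - x))
  unfold linearizedObjective at h
  nlinarith [mul_le_mul_of_nonneg_left hlin hK]

end LinearizedObjective

theorem stmt_10_general {n m : ℕ}
    (F : EuclideanSpace ℝ (Fin n) → EuclideanSpace ℝ (Fin m))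
    (g : EuclideanSpace ℝ (Fin m) → ℝ)
    (D : Set (EuclideanSpace ℝ (Fin n)))
    (hF : ContDiff ℝ 2 F)
    (hg : ConvexOn ℝ Set.univ g)
    (hDne : D.Nonempty) (hDcl : IsClosed D)
    (p : ℝ → EuclideanSpace ℝ (Fin n) → EuclideanSpace ℝ (Fin n))
    (V : ℝ → EuclideanSpace ℝ (Fin n) → ℝ)
    (hp : ∀ μ, 0 < μ → ∀ x, p μ x ∈ D ∧ ∀ z ∈ D,
      g (F x + fderiv ℝ F x (p μ x - x)) + μ / 2 * ‖p μ x - x‖ ^ 2 ≤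
      g (F x + fderiv ℝ F x (z - x)) + μ / 2 * ‖z - x‖ ^ 2)
    (hV : ∀ μ, 0 < μ → ∀ x,
      V μ x = g (F x + fderiv ℝ F x (p μ x - x)) + μ / 2 * ‖p μ x - x‖ ^ 2)
    (μ : ℝ) (hμ : 0 < μ) :
    Continuous (V μ) := by
  obtain ⟨z₀, hz₀⟩ := hDne
  obtain ⟨c, K, hK, hgK⟩ := hg.exists_sub_mul_norm_le
  have hF1 : ContDiff ℝ 1 F := hF.of_le (by norm_num)
  have hΦ := continuous_linearizedObjective hF1 hg.locallyLipschitz.continuous μ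
  have hmin (x) : IsMinOn (linearizedObjective F g μ x) D (p μ x) := (hp μ hμ x).2
  set B := fun x ↦
    1 + (K * ‖fderiv ℝ F x‖ + |linearizedObjective F g μ x z₀ - c + K * ‖F x‖|) / (μ / 2)
  have hB : Continuous B := by
    have hF' : Continuous (fderiv ℝ F) := hF1.continuous_fderiv one_ne_zero
    have hΦ₀ : Continuous fun x ↦ linearizedObjective F g μ x z₀ :=
      hΦ.comp (continuous_id.prodMk continuous_const)
    fun_prop
  have hpB (x) : dist (p μ x) x ≤ B x := by
    rw [dist_eq_norm]
    exact norm_sub_le_of_linearizedObjective_le hgK hK hμ (hmin x hz₀)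
  rw [show V μ = fun x ↦ linearizedObjective F g μ x (p μ x) from funext (hV μ hμ),
    continuous_iff_continuousAt]
  intro x₀
  refine continuousAt_of_isMinOn hΦ ((isCompact_closedBall x₀ (B x₀ + 2)).inter_left hDcl)
    inter_subset_left hmin ?_
  filter_upwards [eventually_mem_closedBall_of_dist_le hB hpB x₀] with x hx
  exact ⟨(hp μ hμ x).1, hx⟩

/-- For every fixed `μ > 0`, the value function `x ↦ V_μ(x)` is continuous on
`ℝ^n`. -/
theorem stmt_10 {n m : ℕ}
    (F : EuclideanSpace ℝ (Fin n) → EuclideanSpace ℝ (Fin m))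
    (g : EuclideanSpace ℝ (Fin m) → ℝ)
    (D : Set (EuclideanSpace ℝ (Fin n)))
    (hF : ContDiff ℝ 2 F)
    (hg : ConvexOn ℝ Set.univ g) (hgc : Continuous g)
    (hDne : D.Nonempty) (hDcl : IsClosed D) (hDcv : Convex ℝ D)
    (p : ℝ → EuclideanSpace ℝ (Fin n) → EuclideanSpace ℝ (Fin n))
    (V : ℝ → EuclideanSpace ℝ (Fin n) → ℝ)
    (hp : ∀ μ, 0 < μ → ∀ x, p μ x ∈ D ∧ ∀ z ∈ D,
      g (F x + fderiv ℝ F x (p μ x - x)) + μ / 2 * ‖p μ x - x‖ ^ 2 ≤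
      g (F x + fderiv ℝ F x (z - x)) + μ / 2 * ‖z - x‖ ^ 2)
    (hV : ∀ μ, 0 < μ → ∀ x,
      V μ x = g (F x + fderiv ℝ F x (p μ x - x)) + μ / 2 * ‖p μ x - x‖ ^ 2)
    (μ : ℝ) (hμ : 0 < μ) :
    Continuous (V μ) :=
  stmt_10_general F g D hF hg hDne hDcl p V hp hV μ hμ
end

section
/- Let x ∈ D. Then x = p_μ(x) for some μ > 0 if and only if there exists a subgradient v of g at F(x) such that ⟨∇F(x)* v, y − x⟩ ≥ 0 for all y ∈ D, where ∇F(x)* denotes the adjoint of ∇F(x). -/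
open scoped RealInnerProductSpace
set_option maxHeartbeats 1000000

private lemma combo_lt {a b u1 u2 w1 w2 : ℝ} (ha : 0 ≤ a) (hb : 0 ≤ b) (hab : a + b = 1)
    (h1 : u1 < w1) (h2 : u2 < w2) : a * u1 + b * u2 < a * w1 + b * w2 := by
  rcases ha.eq_or_lt with rfl | ha'
  · simp only [zero_mul, zero_add]
    have hb1 : b = 1 := by linarith
    nlinarith
  · nlinarith [mul_le_mul_of_nonneg_left h2.le hb]

/-- For `x ∈ D`, `x = p_μ(x)` for some `μ > 0` iff there is a subgradient `v` of
`g` at `F x` with `⟪∇F(x)* v, y - x⟫ ≥ 0` for all `y ∈ D`. -/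
theorem stmt_12 {n m : ℕ}
    (F : EuclideanSpace ℝ (Fin n) → EuclideanSpace ℝ (Fin m))
    (g : EuclideanSpace ℝ (Fin m) → ℝ)
    (D : Set (EuclideanSpace ℝ (Fin n)))
    (hF : ContDiff ℝ 2 F)
    (hg : ConvexOn ℝ Set.univ g) (hgc : Continuous g)
    (hDne : D.Nonempty) (hDcl : IsClosed D) (hDcv : Convex ℝ D)
    (p : ℝ → EuclideanSpace ℝ (Fin n) → EuclideanSpace ℝ (Fin n))
    (hp : ∀ μ, 0 < μ → ∀ x, p μ x ∈ D ∧ ∀ z ∈ D,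
      g (F x + fderiv ℝ F x (p μ x - x)) + μ / 2 * ‖p μ x - x‖ ^ 2 ≤
      g (F x + fderiv ℝ F x (z - x)) + μ / 2 * ‖z - x‖ ^ 2)
    (x : EuclideanSpace ℝ (Fin n)) (hx : x ∈ D) :
    (∃ μ > (0 : ℝ), x = p μ x) ↔
      ∃ v : EuclideanSpace ℝ (Fin m),
        (∀ w, g w ≥ g (F x) + ⟪v, w - F x⟫) ∧
        ∀ y ∈ D, ⟪ContinuousLinearMap.adjoint (fderiv ℝ F x) v, y - x⟫ ≥ 0 := by
  set A : EuclideanSpace ℝ (Fin n) →L[ℝ] EuclideanSpace ℝ (Fin m) := fderiv ℝ F x with hA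
  constructor
  · rintro ⟨μ, hμ, hxp⟩
    -- x is a minimizer of the subproblem
    have hbase : ∀ z ∈ D, g (F x) ≤ g (F x + A (z - x)) + μ / 2 * ‖z - x‖ ^ 2 := by
      intro z hz
      have h := (hp μ hμ x).2 z hz
      rw [← hxp] at h
      simpa using h
    -- Step 1: g (F x + A (z - x)) ≥ g (F x) for all z ∈ D
    have hq : ∀ z ∈ D, g (F x) ≤ g (F x + A (z - x)) := by
      intro z hz
      by_contra hlt
      push_neg at hlt
      have hδpos : 0 < g (F x) - g (F x + A (z - x)) := by linarith
      set δ : ℝ := g (F x) - g (F x + A (z - x)) with hδ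
      have hden : 0 < μ * (‖z - x‖ ^ 2 + 1) := by positivity
      set t : ℝ := min 1 (δ / (μ * (‖z - x‖ ^ 2 + 1))) with ht
      have ht0 : 0 < t := lt_min one_pos (div_pos hδpos hden)
      have ht1 : t ≤ 1 := min_le_left _ _
      have htsmall : t * (μ * (‖z - x‖ ^ 2 + 1)) ≤ δ := by
        calc t * (μ * (‖z - x‖ ^ 2 + 1))
            ≤ (δ / (μ * (‖z - x‖ ^ 2 + 1))) * (μ * (‖z - x‖ ^ 2 + 1)) := by
              apply mul_le_mul_of_nonneg_right (min_le_right _ _) hden.le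
          _ = δ := div_mul_cancel₀ _ (ne_of_gt hden)
      have hzt : x + t • (z - x) ∈ D := by
        have h2 := hDcv hx hz (by linarith : (0:ℝ) ≤ 1 - t) ht0.le (by ring)
        convert h2 using 1
        module
      have hb := hbase _ hzt
      have harg : x + t • (z - x) - x = t • (z - x) := by abel
      rw [harg, map_smul, norm_smul] at hb
      have hnorm : (‖t‖ * ‖z - x‖) ^ 2 = t ^ 2 * ‖z - x‖ ^ 2 := by
        rw [mul_pow, Real.norm_eq_abs, sq_abs]
      rw [hnorm] at hb
      have hcvx := hg.2 (Set.mem_univ (F x)) (Set.mem_univ (F x + A (z - x)))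
        (by linarith : (0:ℝ) ≤ 1 - t) ht0.le (by ring)
      have hpt : (1 - t) • (F x) + t • (F x + A (z - x)) = F x + t • A (z - x) := by
        module
      rw [hpt, smul_eq_mul, smul_eq_mul] at hcvx
      -- hb : g (F x) ≤ g (F x + t • A (z-x)) + μ/2 * (t^2 * ‖z-x‖^2)
      -- hcvx : g (F x + t • A (z-x)) ≤ (1-t) * g (F x) + t * g (F x + A (z-x))
      have h1 : t * δ ≤ μ / 2 * (t ^ 2 * ‖z - x‖ ^ 2) := by
        rw [hδ]; nlinarith
      nlinarith [mul_le_mul_of_nonneg_left htsmall ht0.le,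
        mul_pos (mul_pos ht0 ht0) hμ, sq_nonneg (‖z - x‖)]
    -- Step 2: separation
    set S : Set (EuclideanSpace ℝ (Fin m) × ℝ) :=
      {q | ∃ z ∈ D, g (F x + q.1 + A (z - x)) < g (F x) + q.2} with hS
    have hSopen : IsOpen S := by
      have hrw : S = ⋃ z ∈ D, {q : EuclideanSpace ℝ (Fin m) × ℝ |
          g (F x + q.1 + A (z - x)) < g (F x) + q.2} := by
        ext q; simp [hS]
      rw [hrw]
      refine isOpen_biUnion fun z _ => ?_
      exact isOpen_lt (hgc.comp (by fun_prop)) (by fun_prop)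
    have hSconv : Convex ℝ S := by
      rintro ⟨d₁, t₁⟩ ⟨z₁, hz₁, h1⟩ ⟨d₂, t₂⟩ ⟨z₂, hz₂, h2⟩ a b ha hb hab
      obtain rfl : b = 1 - a := by linarith
      refine ⟨a • z₁ + (1 - a) • z₂, hDcv hz₁ hz₂ ha hb hab, ?_⟩
      have harg : F x + (a • (d₁, t₁) + (1 - a) • (d₂, t₂)).1 + A (a • z₁ + (1 - a) • z₂ - x)
          = a • (F x + d₁ + A (z₁ - x)) + (1 - a) • (F x + d₂ + A (z₂ - x)) := by
        simp only [Prod.smul_mk, Prod.mk_add_mk]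
        have : A (a • z₁ + (1 - a) • z₂ - x) = a • A (z₁ - x) + (1 - a) • A (z₂ - x) := by
          rw [← map_smul, ← map_smul, ← map_add]
          congr 1
          module
        rw [this]
        module
      rw [harg]
      have hcv := hg.2 (Set.mem_univ (F x + d₁ + A (z₁ - x)))
        (Set.mem_univ (F x + d₂ + A (z₂ - x))) ha hb hab
      rw [smul_eq_mul, smul_eq_mul] at hcv
      have hsnd : (a • (d₁, t₁) + (1 - a) • (d₂, t₂)).2 = a * t₁ + (1 - a) * t₂ := rfl
      rw [hsnd]
      calc g (a • (F x + d₁ + A (z₁ - x)) + (1 - a) • (F x + d₂ + A (z₂ - x)))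
          ≤ a * g (F x + d₁ + A (z₁ - x)) + (1 - a) * g (F x + d₂ + A (z₂ - x)) := hcv
        _ < a * (g (F x) + t₁) + (1 - a) * (g (F x) + t₂) := combo_lt ha hb hab h1 h2
        _ = g (F x) + (a * t₁ + (1 - a) * t₂) := by ring
    have h00 : ((0, 0) : EuclideanSpace ℝ (Fin m) × ℝ) ∉ S := by
      rintro ⟨z, hz, hlt⟩
      simp only [add_zero] at hlt
      exact absurd hlt (not_lt.2 (hq z hz))
    obtain ⟨f, hf⟩ := geometric_hahn_banach_open_point hSconv hSopen h00
    have hf0 : f ((0 : EuclideanSpace ℝ (Fin m)), (0 : ℝ)) = 0 := by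
      have : ((0, 0) : EuclideanSpace ℝ (Fin m) × ℝ) = 0 := rfl
      rw [this, map_zero]
    set c : ℝ := f (0, 1) with hc
    have hfsplit : ∀ (d : EuclideanSpace ℝ (Fin m)) (t : ℝ),
        f (d, t) = f (d, 0) + t * c := by
      intro d t
      have hdt : ((d, t) : EuclideanSpace ℝ (Fin m) × ℝ)
          = (d, (0 : ℝ)) + t • ((0 : EuclideanSpace ℝ (Fin m)), (1 : ℝ)) := by
        simp [Prod.ext_iff]
      rw [hdt, map_add, map_smul, smul_eq_mul, hc]
    have hcneg : c < 0 := by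
      have hmem : ((0, 1) : EuclideanSpace ℝ (Fin m) × ℝ) ∈ S := by
        refine ⟨x, hx, ?_⟩
        simp
      have := hf _ hmem
      rw [hf0] at this
      exact this
    have hcne : (-c) ≠ 0 := ne_of_gt (neg_pos.2 hcneg)
    -- key inequality
    have key : ∀ (d : EuclideanSpace ℝ (Fin m)), ∀ z ∈ D,
        f (d, 0) + c * (g (F x + d + A (z - x)) - g (F x)) ≤ 0 := by
      intro d z hz
      set P : ℝ := f (d, 0) + c * (g (F x + d + A (z - x)) - g (F x)) with hP
      by_contra hpos
      push_neg at hpos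
      have hstep : ∀ ε : ℝ, 0 < ε → P < ε * (-c) := by
        intro ε hε
        have hmem : ((d, (g (F x + d + A (z - x)) - g (F x)) + ε) :
            EuclideanSpace ℝ (Fin m) × ℝ) ∈ S := by
          refine ⟨z, hz, ?_⟩
          simp only
          linarith
        have h := hf _ hmem
        rw [hf0, hfsplit] at h
        rw [hP]
        nlinarith
      have hlt2 : P < P / (-c) * (-c) := hstep (P / (-c)) (div_pos hpos (neg_pos.2 hcneg))
      rw [div_mul_cancel₀ _ hcne] at hlt2
      exact lt_irrefl _ hlt2
    -- construct the subgradient v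
    set L : EuclideanSpace ℝ (Fin m) →L[ℝ] ℝ :=
      f.comp (ContinuousLinearMap.inl ℝ (EuclideanSpace ℝ (Fin m)) ℝ) with hL
    set v : EuclideanSpace ℝ (Fin m) :=
      (-c)⁻¹ • (InnerProductSpace.toDual ℝ (EuclideanSpace ℝ (Fin m))).symm L with hv
    have hvd : ∀ d : EuclideanSpace ℝ (Fin m), ⟪v, d⟫ = (-c)⁻¹ * f (d, 0) := by
      intro d
      rw [hv, real_inner_smul_left, InnerProductSpace.toDual_symm_apply]
      congr 1
    have hcinv : (0:ℝ) ≤ (-c)⁻¹ := inv_nonneg.2 (neg_pos.2 hcneg).le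
    refine ⟨v, ?_, ?_⟩
    · intro w
      have hk := key (w - F x) x hx
      have harg : F x + (w - F x) + A (x - x) = w := by
        rw [sub_self, map_zero, add_zero]
        abel
      rw [harg] at hk
      rw [hvd]
      -- hk : f (w - F x, 0) + c * (g w - g (F x)) ≤ 0
      have h2 : (-c)⁻¹ * f (w - F x, 0) ≤ (-c)⁻¹ * ((-c) * (g w - g (F x))) :=
        mul_le_mul_of_nonneg_left (by linarith) hcinv
      rw [← mul_assoc, inv_mul_cancel₀ hcne, one_mul] at h2
      linarith
    · intro y hy
      have hk := key (-(A (y - x))) y hy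
      have harg : F x + -(A (y - x)) + A (y - x) = F x := by abel
      rw [harg, sub_self, mul_zero, add_zero] at hk
      -- hk : f (-(A (y - x)), 0) ≤ 0
      rw [ge_iff_le, ContinuousLinearMap.adjoint_inner_left]
      have h3 := hvd (-(A (y - x)))
      rw [inner_neg_right] at h3
      have h4 : (-c)⁻¹ * f (-(A (y - x)), 0) ≤ 0 :=
        mul_nonpos_of_nonneg_of_nonpos hcinv hk
      linarith
  · rintro ⟨v, hv1, hv2⟩
    refine ⟨1, one_pos, ?_⟩
    obtain ⟨hPD, hmin⟩ := hp 1 one_pos x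
    have h := hmin x hx
    simp only [sub_self, map_zero, add_zero, norm_zero] at h
    have hsg := hv1 (F x + A (p 1 x - x))
    rw [add_sub_cancel_left] at hsg
    have hnc := hv2 _ hPD
    rw [ContinuousLinearMap.adjoint_inner_left] at hnc
    have hn : ‖p 1 x - x‖ ^ 2 ≤ 0 := by nlinarith
    have hz : ‖p 1 x - x‖ = 0 := by
      have := sq_nonneg ‖p 1 x - x‖
      nlinarith [norm_nonneg (p 1 x - x)]
    have : p 1 x - x = 0 := norm_eq_zero.mp hz
    have : p 1 x = x := by
      have h5 := sub_eq_zero.mp this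
      exact h5
    exact this.symm
end

section
/- Let x ∈ D and μ > 0 with x = p_μ(x). Then x = p_{μ'}(x) for every μ' > 0; that is, the fixed points of the iteration map p_μ do not depend on the value of μ > 0. -/
set_option maxHeartbeats 800000


/-- If `x ∈ D` is a fixed point of `p_μ` for some `μ > 0`, then it is a fixed
point of `p_μ'` for every `μ' > 0`. -/
theorem stmt_13 {n m : ℕ}
    (F : EuclideanSpace ℝ (Fin n) → EuclideanSpace ℝ (Fin m))
    (g : EuclideanSpace ℝ (Fin m) → ℝ)
    (D : Set (EuclideanSpace ℝ (Fin n)))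
    (hF : ContDiff ℝ 2 F)
    (hg : ConvexOn ℝ Set.univ g) (hgc : Continuous g)
    (hDne : D.Nonempty) (hDcl : IsClosed D) (hDcv : Convex ℝ D)
    (p : ℝ → EuclideanSpace ℝ (Fin n) → EuclideanSpace ℝ (Fin n))
    (hp : ∀ μ, 0 < μ → ∀ x, p μ x ∈ D ∧ ∀ z ∈ D,
      g (F x + fderiv ℝ F x (p μ x - x)) + μ / 2 * ‖p μ x - x‖ ^ 2 ≤
      g (F x + fderiv ℝ F x (z - x)) + μ / 2 * ‖z - x‖ ^ 2)
    (x : EuclideanSpace ℝ (Fin n)) (hx : x ∈ D)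
    (μ : ℝ) (hμ : 0 < μ) (hfix : x = p μ x) :
    ∀ μ' : ℝ, 0 < μ' → x = p μ' x := by
  intro μ' hμ'
  obtain ⟨hyD, hyopt⟩ := hp μ' hμ' x
  set y := p μ' x with hy
  set A := fderiv ℝ F x with hA
  -- optimality of x for parameter μ
  have hxopt := (hp μ hμ x).2
  rw [← hfix] at hxopt
  simp only [sub_self, map_zero, add_zero, norm_zero] at hxopt
  -- optimality of y for parameter μ', tested at z = x
  have hy0 : g (F x + A (y - x)) + μ' / 2 * ‖y - x‖ ^ 2 ≤ g (F x) := by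
    have := hyopt x hx
    simpa using this
  -- choose small t
  set t : ℝ := min 1 (μ' / (2 * μ)) with ht
  have ht0 : 0 < t := lt_min one_pos (by positivity)
  have ht1 : t ≤ 1 := min_le_left _ _
  have htμ : μ * t ≤ μ' / 2 := by
    have : t ≤ μ' / (2 * μ) := min_le_right _ _
    calc μ * t ≤ μ * (μ' / (2 * μ)) := by nlinarith
    _ = μ' / 2 := by field_simp
  -- the point z = x + t • (y - x) lies in D
  have hzD : x + t • (y - x) ∈ D := by
    have h := hDcv hx hyD (show (0:ℝ) ≤ 1 - t by linarith) ht0.le (by ring : (1 - t) + t = 1)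
    have he : (1 - t) • x + t • y = x + t • (y - x) := by
      simp [smul_sub, sub_smul]; abel
    rwa [he] at h
  have h1 := hxopt _ hzD
  have hsub : x + t • (y - x) - x = t • (y - x) := by abel
  rw [hsub] at h1
  rw [map_smul, norm_smul] at h1
  have habs : ‖t‖ = t := abs_of_pos ht0
  rw [habs] at h1
  -- convexity of g
  have hcvx : g (F x + t • A (y - x)) ≤ (1 - t) * g (F x) + t * g (F x + A (y - x)) := by
    have h := hg.2 (Set.mem_univ (F x)) (Set.mem_univ (F x + A (y - x)))
      (show (0:ℝ) ≤ 1 - t by linarith) ht0.le (by ring : (1 - t) + t = 1)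
    have he : (1 - t) • F x + t • (F x + A (y - x)) = F x + t • A (y - x) := by
      simp [smul_add, sub_smul]; abel
    rwa [he] at h
  set r := ‖y - x‖ with hr
  have hr0 : 0 ≤ r := norm_nonneg _
  -- combine: g (F x) ≤ g(Fx + A(y-x)) + μ t /2 * r^2
  have key : μ' / 2 * r ^ 2 ≤ μ * t / 2 * r ^ 2 := by nlinarith [h1, hcvx, hy0, ht0]
  have hrz : r = 0 := by
    by_contra h
    have hrp : 0 < r := lt_of_le_of_ne hr0 (Ne.symm h)
    have hr2 : 0 < r ^ 2 := by positivity
    nlinarith [key, htμ, hμ', hr2, mul_le_mul_of_nonneg_right htμ (le_of_lt hr2)]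
  have : y - x = 0 := by rwa [hr, norm_eq_zero] at hrz
  have : y = x := by rwa [sub_eq_zero] at this
  exact this.symm
end

section
/- Fix μ > 0 and suppose V_μ is (Fréchet) differentiable at x̄ ∈ ℝ^n. Then there exists a subgradient v = (v₁, …, v_m) of g at F(x̄) + ∇F(x̄)(p_μ(x̄) − x̄) such that ∇V_μ(x̄) = (Σ_{i=1}^m v_i ∇²f_i(x̄))(p_μ(x̄) − x̄) + μ(x̄ − p_μ(x̄)), where f_i denotes the i-th coordinate function of F and ∇²f_i(x̄) its Hessian at x̄. -/
/-!
Put `p = p_μ(x̄)` and `G y = F y + ∇F(y)(p - y)`. Testing the optimality of `p_μ(y)` against the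
fixed point `p` shows that `V_μ - μ/2‖p - ·‖²` lies below `g ∘ G` and touches it at `x̄`. Comparing
difference quotients along rays, and using that the difference quotients of the convex `g` decrease
as the step shrinks, the derivative of this function at `x̄` is dominated by
`h ↦ g'(G x̄; G'(x̄) h)`. The directional derivative `g'(z; ·)` is sublinear and bounded by
`g (z + ·) - g z`, so Hahn–Banach extends the functional from the range of `G'(x̄)` to a
subgradient `v`; finally `G'(x̄) h = ∇²F(x̄)(h, p - x̄)`.
-/

open Set Filter Topology
open scoped RealInnerProductSpace

noncomputable def dirDeriv {E : Type*} [AddCommGroup E] [Module ℝ E] (g : E → ℝ) (z d : E) : ℝ :=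
  derivWithin (fun t : ℝ => g (z + t • d)) (Ioi 0) 0

lemma tendsto_mul_left_nhdsGT_zero {c : ℝ} (hc : 0 < c) :
    Tendsto (fun t => c * t) (𝓝[>] 0) (𝓝[>] 0) := by
  simpa only [comap_mulLeft_nhdsGT_zero hc] using tendsto_comap (f := (c * ·)) (x := 𝓝[>] (0 : ℝ))

lemma HasFDerivAt.tendsto_slope_ray {E F : Type*} [NormedAddCommGroup E] [NormedSpace ℝ E]
    [NormedAddCommGroup F] [NormedSpace ℝ F] {f : E → F} {f' : E →L[ℝ] F} {x : E}
    (hf : HasFDerivAt f f' x) (h : E) :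
    Tendsto (fun s : ℝ => s⁻¹ • (f (x + s • h) - f x)) (𝓝[>] 0) (𝓝 (f' h)) := by
  have hray : HasDerivAt (fun s : ℝ => x + s • h) h 0 :=
    ((hasDerivAt_id 0).smul_const h).const_add x |>.congr_deriv (one_smul ℝ h)
  have hf₀ : HasFDerivAt f f' (x + (0 : ℝ) • h) := by simpa using hf
  simpa using (hf₀.comp_hasDerivAt 0 hray).tendsto_slope_zero_right

namespace ConvexOn

section VectorSpace

variable {E : Type*} [AddCommGroup E] [Module ℝ E] {g : E → ℝ}

lemma comp_line (hg : ConvexOn ℝ univ g) (z d : E) :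
    ConvexOn ℝ univ (fun t : ℝ => g (z + t • d)) := by
  have hline : (fun t : ℝ => g (z + t • d)) = g ∘ AffineMap.lineMap z (z + d) := by
    funext t
    simp [AffineMap.lineMap_apply_module', add_comm]
  simpa only [hline, preimage_univ] using hg.comp_affineMap (AffineMap.lineMap z (z + d))

lemma div_sub_le_div_sub (hg : ConvexOn ℝ univ g) (z d : E) {s t : ℝ} (hs : 0 < s)
    (hst : s ≤ t) : (g (z + s • d) - g z) / s ≤ (g (z + t • d) - g z) / t := by
  simpa using (hg.comp_line z d).secant_mono (a := 0) trivial trivial trivial hs.ne'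
    (hs.trans_le hst).ne' hst

lemma tendsto_div_sub_dirDeriv (hg : ConvexOn ℝ univ g) (z d : E) :
    Tendsto (fun t : ℝ => (g (z + t • d) - g z) / t) (𝓝[>] 0) (𝓝 (dirDeriv g z d)) := by
  have := (hasDerivWithinAt_iff_tendsto_slope' self_notMem_Ioi).mp
    ((hg.comp_line z d).hasDerivWithinAt_rightDeriv_of_mem_interior (x := 0) (by simp))
  simpa [slope_fun_def_field, dirDeriv] using this

lemma dirDeriv_le_sub (hg : ConvexOn ℝ univ g) (z d : E) : dirDeriv g z d ≤ g (z + d) - g z := by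
  simpa [slope_def_field, dirDeriv] using
    (hg.comp_line z d).rightDeriv_le_slope_of_mem_interior (x := 0) (y := 1) (by simp) trivial
      one_pos

lemma dirDeriv_smul (hg : ConvexOn ℝ univ g) (z d : E) {c : ℝ} (hc : 0 < c) :
    dirDeriv g z (c • d) = c * dirDeriv g z d := by
  refine tendsto_nhds_unique (hg.tendsto_div_sub_dirDeriv z (c • d)) ?_
  have := ((hg.tendsto_div_sub_dirDeriv z d).comp (tendsto_mul_left_nhdsGT_zero hc)).const_mul c
  refine this.congr' (eventually_nhdsWithin_of_forall fun t (ht : 0 < t) => ?_)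
  simp only [Function.comp_apply, smul_smul, mul_comm t c]
  field_simp

lemma dirDeriv_zero (hg : ConvexOn ℝ univ g) (z : E) : dirDeriv g z 0 = 0 := by
  have := hg.dirDeriv_smul z 0 two_pos
  rw [smul_zero] at this
  linarith

lemma dirDeriv_add_le (hg : ConvexOn ℝ univ g) (z d e : E) :
    dirDeriv g z (d + e) ≤ dirDeriv g z d + dirDeriv g z e := by
  have hlim := fun d =>
    (hg.tendsto_div_sub_dirDeriv z d).comp (tendsto_mul_left_nhdsGT_zero two_pos)
  refine le_of_tendsto_of_tendsto (hg.tendsto_div_sub_dirDeriv z (d + e)) ((hlim d).add (hlim e))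
    (eventually_nhdsWithin_of_forall fun t (ht : 0 < t) => ?_)
  have hhalf : (0 : ℝ) ≤ 1 / 2 := by norm_num
  have hmid := hg.2 (mem_univ (z + (2 * t) • d)) (mem_univ (z + (2 * t) • e)) hhalf hhalf
    (by norm_num)
  have hpt : (1 / 2 : ℝ) • (z + (2 * t) • d) + (1 / 2 : ℝ) • (z + (2 * t) • e) =
      z + t • (d + e) := by
    module
  rw [hpt, smul_eq_mul, smul_eq_mul] at hmid
  show _ ≤ _ / _ + _ / _
  rw [← add_div, div_le_div_iff₀ ht (by positivity)]
  nlinarith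

lemma exists_linearMap_le_sub_comp_eq {F : Type*} [AddCommGroup F] [Module ℝ F]
    (hg : ConvexOn ℝ univ g) (z : E) (A : F →ₗ[ℝ] E) (ℓ : F →ₗ[ℝ] ℝ)
    (hℓ : ∀ x, ℓ x ≤ dirDeriv g z (A x)) :
    ∃ φ : E →ₗ[ℝ] ℝ, (∀ y, φ (y - z) ≤ g y - g z) ∧ φ ∘ₗ A = ℓ := by
  have hker : LinearMap.ker A ≤ LinearMap.ker ℓ := by
    intro x hx
    rw [LinearMap.mem_ker] at hx ⊢
    have h₁ := hℓ x
    have h₂ := hℓ (-x)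
    rw [hx, hg.dirDeriv_zero] at h₁
    rw [map_neg, map_neg, hx, neg_zero, hg.dirDeriv_zero] at h₂
    linarith
  let f : E →ₗ.[ℝ] ℝ :=
    ⟨LinearMap.range A, (LinearMap.ker A).liftQ ℓ hker ∘ₗ A.quotKerEquivRange.symm.toLinearMap⟩
  have hf : ∀ x, f ⟨A x, LinearMap.mem_range_self A x⟩ = ℓ x := fun x => by
    simp [f, LinearMap.quotKerEquivRange_symm_apply_image]
  obtain ⟨φ, hφf, hφN⟩ := exists_extension_of_le_sublinear f (dirDeriv g z)
    (fun c hc d => hg.dirDeriv_smul z d hc) (hg.dirDeriv_add_le z) (by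
      rintro ⟨_, x, rfl⟩
      exact (hf x).trans_le (hℓ x))
  refine ⟨φ, fun y => ?_, LinearMap.ext fun x => (hφf _).trans (hf x)⟩
  simpa using (hφN (y - z)).trans (hg.dirDeriv_le_sub z (y - z))

end VectorSpace

section Normed

variable {E E' : Type*} [NormedAddCommGroup E] [NormedSpace ℝ E] [NormedAddCommGroup E']
  [NormedSpace ℝ E'] {g : E' → ℝ} {G : E → E'} {A : E →L[ℝ] E'} {ψ : E → ℝ} {ψ' : E →L[ℝ] ℝ}
  {x : E}

lemma le_dirDeriv_of_le_comp (hg : ConvexOn ℝ univ g) (hgc : Continuous g)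
    (hG : HasFDerivAt G A x) (hψ : HasFDerivAt ψ ψ' x) (hle : ∀ y, ψ y ≤ g (G y))
    (heq : ψ x = g (G x)) (h : E) : ψ' h ≤ dirDeriv g (G x) (A h) := by
  set z := G x
  set q : ℝ → E' := fun s => s⁻¹ • (G (x + s • h) - z)
  have hq := hG.tendsto_slope_ray h
  have hslope : ∀ t, 0 < t → ψ' h ≤ (g (z + t • A h) - g z) / t := by
    intro t ht
    have hlim : Tendsto (fun s => (g (z + t • q s) - g z) / t) (𝓝[>] 0)
        (𝓝 ((g (z + t • A h) - g z) / t)) :=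
      (((hgc.tendsto _).comp (tendsto_const_nhds.add (hq.const_smul t))).sub_const _).div_const _
    refine le_of_tendsto_of_tendsto (hψ.tendsto_slope_ray h) hlim ?_
    filter_upwards [Ioc_mem_nhdsGT ht] with s ⟨hs, hst⟩
    have hGs : z + s • q s = G (x + s • h) := by
      simp only [q, smul_smul, mul_inv_cancel₀ hs.ne', one_smul, add_sub_cancel]
    calc s⁻¹ • (ψ (x + s • h) - ψ x) ≤ (g (z + s • q s) - g z) / s := by
          rw [smul_eq_mul, inv_mul_eq_div, hGs, heq]
          gcongr
          exact hle _
      _ ≤ (g (z + t • q s) - g z) / t := hg.div_sub_le_div_sub z (q s) hs hst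
  exact ge_of_tendsto (hg.tendsto_div_sub_dirDeriv z (A h))
    (eventually_nhdsWithin_of_forall hslope)

end Normed

end ConvexOn

lemma ConvexOn.exists_subgradient_of_le_comp {E E' : Type*} [NormedAddCommGroup E]
    [NormedSpace ℝ E] [NormedAddCommGroup E'] [InnerProductSpace ℝ E'] [FiniteDimensional ℝ E']
    {g : E' → ℝ} {G : E → E'} {A : E →L[ℝ] E'} {ψ : E → ℝ} {ψ' : E →L[ℝ] ℝ} {x : E}
    (hg : ConvexOn ℝ univ g) (hgc : Continuous g) (hG : HasFDerivAt G A x)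
    (hψ : HasFDerivAt ψ ψ' x) (hle : ∀ y, ψ y ≤ g (G y)) (heq : ψ x = g (G x)) :
    ∃ v : E', (∀ y, g (G x) + ⟪v, y - G x⟫ ≤ g y) ∧ ∀ h, ⟪v, A h⟫ = ψ' h := by
  obtain ⟨φ, hφg, hφA⟩ := hg.exists_linearMap_le_sub_comp_eq (G x) (A : E →ₗ[ℝ] E') ψ'
    (hg.le_dirDeriv_of_le_comp hgc hG hψ hle heq)
  refine ⟨(InnerProductSpace.toDual ℝ E').symm (LinearMap.toContinuousLinearMap φ),
    fun y => ?_, fun h => ?_⟩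
  · rw [InnerProductSpace.toDual_symm_apply, LinearMap.coe_toContinuousLinearMap']
    linarith [hφg y]
  · rw [InnerProductSpace.toDual_symm_apply]
    exact congr($hφA h)

lemma hasFDerivAt_add_fderiv_apply_sub {𝕜 E F : Type*} [NontriviallyNormedField 𝕜]
    [NormedAddCommGroup E] [NormedSpace 𝕜 E] [NormedAddCommGroup F] [NormedSpace 𝕜 F]
    {f : E → F} {x : E} (hf : DifferentiableAt 𝕜 f x)
    (hf' : DifferentiableAt 𝕜 (fderiv 𝕜 f) x) (p : E) :
    HasFDerivAt (fun y => f y + fderiv 𝕜 f y (p - y))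
      ((fderiv 𝕜 (fderiv 𝕜 f) x).flip (p - x)) x := by
  refine (hf.hasFDerivAt.add (hf'.hasFDerivAt.clm_apply
    ((hasFDerivAt_const p x).sub (hasFDerivAt_id x)))).congr_fderiv ?_
  ext h
  simp

lemma inner_sum_smul_gradient_fderiv_coord {E : Type*} [NormedAddCommGroup E]
    [InnerProductSpace ℝ E] [CompleteSpace E] {m : ℕ} {f : E → EuclideanSpace ℝ (Fin m)} {x : E}
    (hf : Differentiable ℝ f) (hf' : DifferentiableAt ℝ (fderiv ℝ f) x)
    (v : EuclideanSpace ℝ (Fin m)) (u h : E) :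
    ⟪∑ i, v i • gradient (fun z => fderiv ℝ (fun w => f w i) z u) x, h⟫ =
      ⟪v, fderiv ℝ (fderiv ℝ f) x h u⟫ := by
  have hcoord : ∀ i, (fun z => fderiv ℝ (fun w => f w i) z u) = fun z => fderiv ℝ f z u i :=
    fun i => funext fun z =>
      congr($(((EuclideanSpace.proj (𝕜 := ℝ) i).hasFDerivAt.comp z (hf z).hasFDerivAt).fderiv) u)
  have happly : HasFDerivAt (fun z => fderiv ℝ f z u) ((fderiv ℝ (fderiv ℝ f) x).flip u) x := by
    simpa using hf'.hasFDerivAt.clm_apply (hasFDerivAt_const u x)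
  have hderiv : ∀ i, HasFDerivAt (fun z => fderiv ℝ f z u i)
      ((EuclideanSpace.proj (𝕜 := ℝ) i).comp ((fderiv ℝ (fderiv ℝ f) x).flip u)) x := fun i =>
    (EuclideanSpace.proj (𝕜 := ℝ) i).hasFDerivAt.comp x happly
  rw [sum_inner, PiLp.inner_apply]
  refine Finset.sum_congr rfl fun i _ => ?_
  rw [inner_smul_left, inner_gradient_left, hcoord, (hderiv i).fderiv]
  simp [mul_comm]

theorem stmt_14_general {n m : ℕ}
    (F : EuclideanSpace ℝ (Fin n) → EuclideanSpace ℝ (Fin m))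
    (g : EuclideanSpace ℝ (Fin m) → ℝ)
    (D : Set (EuclideanSpace ℝ (Fin n)))
    (hF : ContDiff ℝ 2 F)
    (hg : ConvexOn ℝ Set.univ g) (hgc : Continuous g)
    (p : ℝ → EuclideanSpace ℝ (Fin n) → EuclideanSpace ℝ (Fin n))
    (V : ℝ → EuclideanSpace ℝ (Fin n) → ℝ)
    (hp : ∀ μ, 0 < μ → ∀ x, p μ x ∈ D ∧ ∀ z ∈ D,
      g (F x + fderiv ℝ F x (p μ x - x)) + μ / 2 * ‖p μ x - x‖ ^ 2 ≤
      g (F x + fderiv ℝ F x (z - x)) + μ / 2 * ‖z - x‖ ^ 2)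
    (hV : ∀ μ, 0 < μ → ∀ x,
      V μ x = g (F x + fderiv ℝ F x (p μ x - x)) + μ / 2 * ‖p μ x - x‖ ^ 2)
    (μ : ℝ) (hμ : 0 < μ) (xbar : EuclideanSpace ℝ (Fin n))
    (hdiff : DifferentiableAt ℝ (V μ) xbar) :
    ∃ v : EuclideanSpace ℝ (Fin m),
      (∀ w, g w ≥ g (F xbar + fderiv ℝ F xbar (p μ xbar - xbar)) +
        ⟪v, w - (F xbar + fderiv ℝ F xbar (p μ xbar - xbar))⟫) ∧
      gradient (V μ) xbar =
        (∑ i : Fin m, v i •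
          gradient (fun z => fderiv ℝ (fun w => F w i) z (p μ xbar - xbar)) xbar) +
        μ • (xbar - p μ xbar) := by
  have hFd : Differentiable ℝ F := hF.differentiable (by norm_num)
  have hF'd : DifferentiableAt ℝ (fderiv ℝ F) xbar :=
    (hF.fderiv_right (m := 1) le_rfl).differentiable one_ne_zero xbar
  have hq : HasFDerivAt (fun y => μ / 2 * ‖p μ xbar - y‖ ^ 2) (μ • innerSL ℝ (xbar - p μ xbar))
      xbar := by
    refine (((hasFDerivAt_const _ xbar).sub (hasFDerivAt_id xbar)).norm_sq.const_mul
      (μ / 2)).congr_fderiv (ContinuousLinearMap.ext fun h => ?_)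
    simp only [Pi.sub_apply, id_eq, map_sub, zero_sub, ContinuousLinearMap.comp_neg,
      ContinuousLinearMap.comp_id, neg_sub, smul_apply, sub_apply, coe_innerSL_apply,
      nsmul_eq_mul, Nat.cast_ofNat, smul_eq_mul]
    ring
  have hle : ∀ y, V μ y - μ / 2 * ‖p μ xbar - y‖ ^ 2 ≤
      g (F y + fderiv ℝ F y (p μ xbar - y)) := fun y => by
    have := (hp μ hμ y).2 (p μ xbar) (hp μ hμ xbar).1
    rw [← hV μ hμ y] at this
    linarith
  obtain ⟨v, hsub, hv⟩ := hg.exists_subgradient_of_le_comp hgc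
    (hasFDerivAt_add_fderiv_apply_sub (hFd xbar) hF'd (p μ xbar)) (hdiff.hasFDerivAt.fun_sub hq)
    hle (by rw [hV μ hμ xbar]; ring)
  refine ⟨v, hsub, ext_inner_right ℝ fun h => ?_⟩
  rw [inner_add_left, inner_sum_smul_gradient_fderiv_coord hFd hF'd,
    ← ContinuousLinearMap.flip_apply, hv h]
  simp only [inner_gradient_left, map_sub, sub_apply, smul_apply, coe_innerSL_apply, smul_eq_mul,
    real_inner_smul_left, inner_sub_left, sub_add_cancel]

/-- If `V_μ` is differentiable at `x̄`, then there is a subgradient `v` of `g` at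
`F x̄ + ∇F(x̄)(p_μ(x̄) - x̄)` such that
`∇V_μ(x̄) = (Σ_i v_i ∇²f_i(x̄))(p_μ(x̄) - x̄) + μ (x̄ - p_μ(x̄))`, where `f_i` is the `i`-th
coordinate of `F` and `∇²f_i(x̄) u` is realized as the gradient at `x̄` of `z ↦ Df_i(z) u`. -/
theorem stmt_14 {n m : ℕ}
    (F : EuclideanSpace ℝ (Fin n) → EuclideanSpace ℝ (Fin m))
    (g : EuclideanSpace ℝ (Fin m) → ℝ)
    (D : Set (EuclideanSpace ℝ (Fin n)))
    (hF : ContDiff ℝ 2 F)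
    (hg : ConvexOn ℝ Set.univ g) (hgc : Continuous g)
    (hDne : D.Nonempty) (hDcl : IsClosed D) (hDcv : Convex ℝ D)
    (p : ℝ → EuclideanSpace ℝ (Fin n) → EuclideanSpace ℝ (Fin n))
    (V : ℝ → EuclideanSpace ℝ (Fin n) → ℝ)
    (hp : ∀ μ, 0 < μ → ∀ x, p μ x ∈ D ∧ ∀ z ∈ D,
      g (F x + fderiv ℝ F x (p μ x - x)) + μ / 2 * ‖p μ x - x‖ ^ 2 ≤
      g (F x + fderiv ℝ F x (z - x)) + μ / 2 * ‖z - x‖ ^ 2)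
    (hV : ∀ μ, 0 < μ → ∀ x,
      V μ x = g (F x + fderiv ℝ F x (p μ x - x)) + μ / 2 * ‖p μ x - x‖ ^ 2)
    (μ : ℝ) (hμ : 0 < μ) (xbar : EuclideanSpace ℝ (Fin n))
    (hdiff : DifferentiableAt ℝ (V μ) xbar) :
    ∃ v : EuclideanSpace ℝ (Fin m),
      (∀ w, g w ≥ g (F xbar + fderiv ℝ F xbar (p μ xbar - xbar)) +
        ⟪v, w - (F xbar + fderiv ℝ F xbar (p μ xbar - xbar))⟫) ∧
      gradient (V μ) xbar =
        (∑ i : Fin m, v i •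
          gradient (fun z => fderiv ℝ (fun w => F w i) z (p μ xbar - xbar)) xbar) +
        μ • (xbar - p μ xbar) :=
  stmt_14_general F g D hF hg hgc p V hp hV μ hμ xbar hdiff
end

section
/- Let x ∈ D, μ, μ' > 0, set y = p_μ(x) and assume g(F(y)) ≤ h(x,y) + (μ/2)‖y − x‖². Then V_{μ'}(y) + (μ'/2)‖p_{μ'}(y) − y‖² ≤ g(F(y)) ≤ V_μ(x) ≤ g(F(x)). -/
set_option maxHeartbeats 1600000 in
/-- Let `x ∈ D`, `μ, μ' > 0`, `y = p_μ(x)` and assume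
`g(F(y)) ≤ h(x,y) + (μ/2)‖y - x‖²`. Then
`V_μ'(y) + (μ'/2)‖p_μ'(y) - y‖² ≤ g(F(y)) ≤ V_μ(x) ≤ g(F(x))`. -/
theorem stmt_16 {n m : ℕ}
    (F : EuclideanSpace ℝ (Fin n) → EuclideanSpace ℝ (Fin m))
    (g : EuclideanSpace ℝ (Fin m) → ℝ)
    (D : Set (EuclideanSpace ℝ (Fin n)))
    (hF : ContDiff ℝ 2 F)
    (hg : ConvexOn ℝ Set.univ g) (hgc : Continuous g)
    (hDne : D.Nonempty) (hDcl : IsClosed D) (hDcv : Convex ℝ D)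
    (p : ℝ → EuclideanSpace ℝ (Fin n) → EuclideanSpace ℝ (Fin n))
    (V : ℝ → EuclideanSpace ℝ (Fin n) → ℝ)
    (hp : ∀ μ, 0 < μ → ∀ x, p μ x ∈ D ∧ ∀ z ∈ D,
      g (F x + fderiv ℝ F x (p μ x - x)) + μ / 2 * ‖p μ x - x‖ ^ 2 ≤
      g (F x + fderiv ℝ F x (z - x)) + μ / 2 * ‖z - x‖ ^ 2)
    (hV : ∀ μ, 0 < μ → ∀ x,
      V μ x = g (F x + fderiv ℝ F x (p μ x - x)) + μ / 2 * ‖p μ x - x‖ ^ 2)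
    (x : EuclideanSpace ℝ (Fin n)) (hx : x ∈ D)
    (μ μ' : ℝ) (hμ : 0 < μ) (hμ' : 0 < μ')
    (y : EuclideanSpace ℝ (Fin n)) (hy : y = p μ x)
    (hdesc : g (F y) ≤ g (F x + fderiv ℝ F x (y - x)) + μ / 2 * ‖y - x‖ ^ 2) :
    V μ' y + μ' / 2 * ‖p μ' y - y‖ ^ 2 ≤ g (F y) ∧
    g (F y) ≤ V μ x ∧ V μ x ≤ g (F x) := by
  obtain ⟨hpD, hmin⟩ := hp μ hμ x
  rw [← hy] at hpD hmin
  obtain ⟨hp'D, hmin'⟩ := hp μ' hμ' y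
  set A := fderiv ℝ F y with hA
  set p' := p μ' y with hp'
  set G := g (F y + A (p' - y)) with hG
  set r := ‖p' - y‖ with hr
  have hr0 : 0 ≤ r := norm_nonneg _
  have key : ∀ lam : ℝ, 0 < lam → lam ≤ 1 →
      G + μ' * r ^ 2 ≤ g (F y) + μ' / 2 * lam * r ^ 2 := by
    intro lam hl0 hl1
    have hz : (1 - lam) • p' + lam • y ∈ D :=
      hDcv hp'D hpD (by linarith) hl0.le (by ring)
    have h1 := hmin' _ hz
    have e1 : ((1 - lam) • p' + lam • y) - y = (1 - lam) • (p' - y) := by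
      module
    rw [e1] at h1
    have e2 : A ((1 - lam) • (p' - y)) = (1 - lam) • A (p' - y) :=
      A.map_smul _ _
    rw [e2] at h1
    have e3 : ‖(1 - lam) • (p' - y)‖ = (1 - lam) * r := by
      rw [norm_smul, Real.norm_eq_abs, abs_of_nonneg (by linarith)]
    rw [e3] at h1
    have e4 : F y + (1 - lam) • A (p' - y)
        = (1 - lam) • (F y + A (p' - y)) + lam • F y := by module
    rw [e4] at h1
    have hconv := hg.2 (Set.mem_univ (F y + A (p' - y))) (Set.mem_univ (F y))
      (by linarith : (0:ℝ) ≤ 1 - lam) hl0.le (by ring)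
    simp only [smul_eq_mul] at hconv
    have h2 : G + μ' / 2 * r ^ 2
        ≤ (1 - lam) * G + lam * g (F y) + μ' / 2 * ((1 - lam) * r) ^ 2 := by
      calc G + μ' / 2 * r ^ 2 ≤ _ := h1
        _ ≤ _ := by linarith
    have h3 : lam * (G + μ' * r ^ 2) ≤ lam * (g (F y) + μ' / 2 * lam * r ^ 2) := by
      nlinarith [h2]
    exact le_of_mul_le_mul_left h3 hl0
  have keyineq : G + μ' * r ^ 2 ≤ g (F y) := by
    apply le_of_forall_pos_le_add
    intro ε hε
    set lam : ℝ := min 1 (2 * ε / (μ' * r ^ 2 + ε)) with hlam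
    have hden : 0 < μ' * r ^ 2 + ε := by positivity
    have hl0 : 0 < lam := lt_min one_pos (by positivity)
    have hl1 : lam ≤ 1 := min_le_left _ _
    have hl2 : lam ≤ 2 * ε / (μ' * r ^ 2 + ε) := min_le_right _ _
    clear_value lam
    have h := key lam hl0 hl1
    have hbd : μ' / 2 * lam * r ^ 2 ≤ ε := by
      have h5 : lam * (μ' * r ^ 2 + ε) ≤ 2 * ε := by
        calc lam * (μ' * r ^ 2 + ε)
            ≤ (2 * ε / (μ' * r ^ 2 + ε)) * (μ' * r ^ 2 + ε) :=
              mul_le_mul_of_nonneg_right hl2 hden.le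
          _ = 2 * ε := by field_simp
      nlinarith [mul_nonneg hl0.le hε.le]
    linarith
  refine ⟨?_, ?_, ?_⟩
  · rw [hV μ' hμ' y, ← hA, ← hp', ← hG, ← hr]
    linarith
  · rw [hV μ hμ x, ← hy]
    exact hdesc
  · rw [hV μ hμ x, ← hy]
    have h := hmin x hx
    simp only [sub_self, map_zero, add_zero, norm_zero] at h
    calc g (F x + fderiv ℝ F x (y - x)) + μ / 2 * ‖y - x‖ ^ 2
        ≤ g (F x) + μ / 2 * 0 ^ 2 := h
      _ = g (F x) := by ring
end

section
/- Let (x_k)_{k∈ℕ} ⊆ D and (μ_k)_{k∈ℕ} ⊆ (0,∞) satisfy, for every k: x_{k+1} = p_{μ_k}(x_k) and g(F(x_{k+1})) ≤ h(x_k, x_{k+1}) + (μ_k/2)‖x_{k+1} − x_k‖². Then the sequence (g(F(x_k)))_k is nonincreasing, every x_k lies in the sublevel set { x ∈ D : g(F(x)) ≤ g(F(x₀)) }, and for every N ∈ ℕ: Σ_{k=0}^{N} μ_k ‖x_{k+1} − x_k‖² ≤ 2 (g(F(x₀)) − g(F(x_{N+1}))). In particular, if g∘F is bounded below on D, then Σ_{k}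 μ_k ‖x_{k+1} − x_k‖² < ∞. -/
/-!
For a convex model `ψ` and a minimizer `p` of `ψ + (μ/2)‖· - x‖²` over a convex set containing `x`,
comparing `p` with the points of the segment `[x, p]` gives `ψ p + μ‖p - x‖² ≤ ψ x`: the
quadratic term is counted twice. The linearized model `y ↦ g (F x + ∇F(x)(y - x))` is convex and
takes the value `g (F x)` at `x`, so together with the descent test each step satisfies
`μ_k ‖x_{k+1} - x_k‖² ≤ 2 (g(F(x_k)) - g(F(x_{k+1})))`; everything else follows by telescoping.
-/

open Set Filter Topology

section ProxStep

variable {E G : Type*} [NormedAddCommGroup E] [NormedSpace ℝ E]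
  [NormedAddCommGroup G] [NormedSpace ℝ G]

theorem ConvexOn.add_mul_norm_sq_le_of_isMinOn {ψ : E → ℝ} {D : Set E} {x p : E} {μ : ℝ}
    (hψ : ConvexOn ℝ D ψ) (hx : x ∈ D) (hp : p ∈ D)
    (hmin : IsMinOn (fun z => ψ z + μ / 2 * ‖z - x‖ ^ 2) D p) :
    ψ p + μ * ‖p - x‖ ^ 2 ≤ ψ x := by
  have hseg : ∀ t ∈ Ioo (0 : ℝ) 1, ψ p + (1 + t) * (μ / 2 * ‖p - x‖ ^ 2) ≤ ψ x := by
    rintro t ⟨ht0, ht1⟩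
    have hzx : (1 - t) • x + t • p - x = t • (p - x) := by module
    have hconv : ψ ((1 - t) • x + t • p) ≤ (1 - t) * ψ x + t * ψ p :=
      hψ.2 hx hp (by linarith) ht0.le (by ring)
    have hcmp : ψ p + μ / 2 * ‖p - x‖ ^ 2 ≤
        ψ ((1 - t) • x + t • p) + μ / 2 * ‖(1 - t) • x + t • p - x‖ ^ 2 :=
      isMinOn_iff.mp hmin _ (hψ.1 hx hp (by linarith) ht0.le (by ring))
    rw [hzx, norm_smul, Real.norm_of_nonneg ht0.le, mul_pow] at hcmp
    have hscaled : (1 - t) * (ψ p + (1 + t) * (μ / 2 * ‖p - x‖ ^ 2)) ≤ (1 - t) * ψ x := by nlinarith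
    exact le_of_mul_le_mul_left hscaled (by linarith)
  have hlim : Tendsto (fun t : ℝ => ψ p + (1 + t) * (μ / 2 * ‖p - x‖ ^ 2)) (𝓝[<] 1)
      (𝓝 (ψ p + (1 + 1) * (μ / 2 * ‖p - x‖ ^ 2))) :=
    tendsto_nhdsWithin_of_tendsto_nhds
      (((tendsto_const_nhds.add tendsto_id).mul_const _).const_add _)
  have := le_of_tendsto hlim (eventually_of_mem (Ioo_mem_nhdsLT one_pos) hseg)
  linarith

theorem convexOn_comp_add_linear_sub {g : G → ℝ} (hg : ConvexOn ℝ univ g) (b : G)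
    (L : E →L[ℝ] G) (x : E) : ConvexOn ℝ univ (fun y => g (b + L (y - x))) := by
  refine ⟨convex_univ, fun y₁ _ y₂ _ s t hs ht hst => ?_⟩
  have hlin : b + L (s • y₁ + t • y₂ - x) = s • (b + L (y₁ - x)) + t • (b + L (y₂ - x)) := by
    obtain rfl : t = 1 - s := by linarith
    simp only [map_sub, map_add, map_smul]
    module
  simpa only [hlin] using hg.2 (mem_univ _) (mem_univ _) hs ht hst

theorem mul_norm_sq_le_two_mul_sub_of_isMinOn {g : G → ℝ} {D : Set E}
    (hg : ConvexOn ℝ univ g) (hD : Convex ℝ D) {x y : E} (hx : x ∈ D) (hy : y ∈ D)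
    (u : G) (L : E →L[ℝ] G) {μ : ℝ}
    (hmin : IsMinOn (fun z => g (u + L (z - x)) + μ / 2 * ‖z - x‖ ^ 2) D y)
    {v : ℝ} (hv : v ≤ g (u + L (y - x)) + μ / 2 * ‖y - x‖ ^ 2) :
    μ * ‖y - x‖ ^ 2 ≤ 2 * (g u - v) := by
  have h := ((convexOn_comp_add_linear_sub hg u L x).subset (subset_univ D) hD)
    |>.add_mul_norm_sq_le_of_isMinOn hx hy hmin
  simp only [sub_self, map_zero, add_zero] at h
  linarith

end ProxStep

theorem sum_range_le_mul_sub_of_le {c f : ℕ → ℝ} {r : ℝ}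
    (h : ∀ k, c k ≤ r * (f k - f (k + 1))) (N : ℕ) :
    ∑ k ∈ Finset.range N, c k ≤ r * (f 0 - f N) := by
  calc ∑ k ∈ Finset.range N, c k ≤ ∑ k ∈ Finset.range N, r * (f k - f (k + 1)) :=
        Finset.sum_le_sum fun k _ => h k
    _ = r * (f 0 - f N) := by rw [← Finset.mul_sum, Finset.sum_range_sub']

theorem summable_of_le_mul_sub {c f : ℕ → ℝ} {r b : ℝ} (hc : ∀ k, 0 ≤ c k)
    (h : ∀ k, c k ≤ r * (f k - f (k + 1))) (hr : 0 ≤ r) (hb : ∀ k, b ≤ f k) : Summable c :=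
  summable_of_sum_range_le (c := r * (f 0 - b)) hc fun N =>
    (sum_range_le_mul_sub_of_le h N).trans (mul_le_mul_of_nonneg_left (by linarith [hb N]) hr)

theorem stmt_17_general {n m : ℕ}
    (F : EuclideanSpace ℝ (Fin n) → EuclideanSpace ℝ (Fin m))
    (g : EuclideanSpace ℝ (Fin m) → ℝ)
    (D : Set (EuclideanSpace ℝ (Fin n)))
    (hg : ConvexOn ℝ Set.univ g)
    (hDcv : Convex ℝ D)
    (p : ℝ → EuclideanSpace ℝ (Fin n) → EuclideanSpace ℝ (Fin n))
    (hp : ∀ μ, 0 < μ → ∀ x, p μ x ∈ D ∧ ∀ z ∈ D,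
      g (F x + fderiv ℝ F x (p μ x - x)) + μ / 2 * ‖p μ x - x‖ ^ 2 ≤
      g (F x + fderiv ℝ F x (z - x)) + μ / 2 * ‖z - x‖ ^ 2)
    (x : ℕ → EuclideanSpace ℝ (Fin n)) (μ : ℕ → ℝ)
    (hxD : ∀ k, x k ∈ D) (hμpos : ∀ k, 0 < μ k)
    (hiter : ∀ k, x (k + 1) = p (μ k) (x k))
    (hdesc : ∀ k, g (F (x (k + 1))) ≤
      g (F (x k) + fderiv ℝ F (x k) (x (k + 1) - x k)) + μ k / 2 * ‖x (k + 1) - x k‖ ^ 2) :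
    Antitone (fun k => g (F (x k))) ∧
    (∀ k, x k ∈ D ∧ g (F (x k)) ≤ g (F (x 0))) ∧
    (∀ N : ℕ, ∑ k ∈ Finset.range (N + 1), μ k * ‖x (k + 1) - x k‖ ^ 2 ≤
      2 * (g (F (x 0)) - g (F (x (N + 1))))) ∧
    ((∃ c : ℝ, ∀ z ∈ D, c ≤ g (F z)) →
      Summable (fun k => μ k * ‖x (k + 1) - x k‖ ^ 2)) := by
  have hstep (k : ℕ) :
      μ k * ‖x (k + 1) - x k‖ ^ 2 ≤ 2 * (g (F (x k)) - g (F (x (k + 1)))) := by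
    obtain ⟨-, hmin⟩ := hp (μ k) (hμpos k) (x k)
    rw [← hiter k] at hmin
    exact mul_norm_sq_le_two_mul_sub_of_isMinOn hg hDcv (hxD k) (hxD (k + 1)) _ _
      (isMinOn_iff.mpr hmin) (hdesc k)
  have hnonneg (k : ℕ) : 0 ≤ μ k * ‖x (k + 1) - x k‖ ^ 2 := by
    have := hμpos k
    positivity
  have hanti : Antitone fun k => g (F (x k)) :=
    antitone_nat_of_succ_le fun k => by linarith [hstep k, hnonneg k]
  refine ⟨hanti, fun k => ⟨hxD k, hanti k.zero_le⟩,
    fun N => sum_range_le_mul_sub_of_le hstep (N + 1), ?_⟩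
  rintro ⟨c, hc⟩
  exact summable_of_le_mul_sub hnonneg hstep zero_le_two fun k => hc _ (hxD k)

/-- For a sequence generated by the composite Gauss-Newton iteration satisfying
the descent test, the objective values `g(F(x_k))` are nonincreasing, the iterates stay in the
initial sublevel set, the partial sums `Σ_{k=0}^N μ_k ‖x_{k+1} - x_k‖²` are bounded by
`2 (g(F(x₀)) - g(F(x_{N+1})))`, and summability holds if `g ∘ F` is bounded below on `D`. -/
theorem stmt_17 {n m : ℕ}
    (F : EuclideanSpace ℝ (Fin n) → EuclideanSpace ℝ (Fin m))
    (g : EuclideanSpace ℝ (Fin m) → ℝ)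
    (D : Set (EuclideanSpace ℝ (Fin n)))
    (hF : ContDiff ℝ 2 F)
    (hg : ConvexOn ℝ Set.univ g) (hgc : Continuous g)
    (hDne : D.Nonempty) (hDcl : IsClosed D) (hDcv : Convex ℝ D)
    (p : ℝ → EuclideanSpace ℝ (Fin n) → EuclideanSpace ℝ (Fin n))
    (hp : ∀ μ, 0 < μ → ∀ x, p μ x ∈ D ∧ ∀ z ∈ D,
      g (F x + fderiv ℝ F x (p μ x - x)) + μ / 2 * ‖p μ x - x‖ ^ 2 ≤
      g (F x + fderiv ℝ F x (z - x)) + μ / 2 * ‖z - x‖ ^ 2)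
    (x : ℕ → EuclideanSpace ℝ (Fin n)) (μ : ℕ → ℝ)
    (hxD : ∀ k, x k ∈ D) (hμpos : ∀ k, 0 < μ k)
    (hiter : ∀ k, x (k + 1) = p (μ k) (x k))
    (hdesc : ∀ k, g (F (x (k + 1))) ≤
      g (F (x k) + fderiv ℝ F (x k) (x (k + 1) - x k)) + μ k / 2 * ‖x (k + 1) - x k‖ ^ 2) :
    Antitone (fun k => g (F (x k))) ∧
    (∀ k, x k ∈ D ∧ g (F (x k)) ≤ g (F (x 0))) ∧
    (∀ N : ℕ, ∑ k ∈ Finset.range (N + 1), μ k * ‖x (k + 1) - x k‖ ^ 2 ≤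
      2 * (g (F (x 0)) - g (F (x (N + 1))))) ∧
    ((∃ c : ℝ, ∀ z ∈ D, c ≤ g (F z)) →
      Summable (fun k => μ k * ‖x (k + 1) - x k‖ ^ 2)) :=
  stmt_17_general F g D hg hDcv p hp x μ hxD hμpos hiter hdesc
end

section
/- Let (x_k)_{k∈ℕ} ⊆ D and (μ_k)_{k∈ℕ} ⊆ (0,∞) satisfy, for every k: x_{k+1} = p_{μ_k}(x_k) and g(F(x_{k+1})) ≤ h(x_k, x_{k+1}) + (μ_k/2)‖x_{k+1} − x_k‖². If the set { x ∈ D : g(F(x)) ≤ g(F(x₀)) } is compact, then the sequence (x_k) is bounded and has at least one accumulation point. -/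
/-- If the initial sublevel set `{x ∈ D : g(F(x)) ≤ g(F(x₀))}` is compact, then
the Gauss-Newton sequence is bounded and has at least one accumulation point. -/
theorem stmt_18 {n m : ℕ}
    (F : EuclideanSpace ℝ (Fin n) → EuclideanSpace ℝ (Fin m))
    (g : EuclideanSpace ℝ (Fin m) → ℝ)
    (D : Set (EuclideanSpace ℝ (Fin n)))
    (hF : ContDiff ℝ 2 F)
    (hg : ConvexOn ℝ Set.univ g) (hgc : Continuous g)
    (hDne : D.Nonempty) (hDcl : IsClosed D) (hDcv : Convex ℝ D)
    (p : ℝ → EuclideanSpace ℝ (Fin n) → EuclideanSpace ℝ (Fin n))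
    (hp : ∀ μ, 0 < μ → ∀ x, p μ x ∈ D ∧ ∀ z ∈ D,
      g (F x + fderiv ℝ F x (p μ x - x)) + μ / 2 * ‖p μ x - x‖ ^ 2 ≤
      g (F x + fderiv ℝ F x (z - x)) + μ / 2 * ‖z - x‖ ^ 2)
    (x : ℕ → EuclideanSpace ℝ (Fin n)) (μ : ℕ → ℝ)
    (hxD : ∀ k, x k ∈ D) (hμpos : ∀ k, 0 < μ k)
    (hiter : ∀ k, x (k + 1) = p (μ k) (x k))
    (hdesc : ∀ k, g (F (x (k + 1))) ≤
      g (F (x k) + fderiv ℝ F (x k) (x (k + 1) - x k)) + μ k / 2 * ‖x (k + 1) - x k‖ ^ 2)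
    (hcpt : IsCompact {z ∈ D | g (F z) ≤ g (F (x 0))}) :
    Bornology.IsBounded (Set.range x) ∧
    ∃ a : EuclideanSpace ℝ (Fin n), MapClusterPt a Filter.atTop x := by
  -- monotonicity of g (F (x k))
  have mono : ∀ k, g (F (x (k + 1))) ≤ g (F (x k)) := by
    intro k
    have h1 := (hp (μ k) (hμpos k) (x k)).2 (x k) (hxD k)
    rw [← hiter k] at h1
    have h2 : x k - x k = 0 := sub_self _
    rw [h2] at h1
    simp only [map_zero, add_zero, norm_zero] at h1
    have h3 : (μ k / 2) * (0 : ℝ) ^ 2 = 0 := by ring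
    rw [h3, add_zero] at h1
    calc g (F (x (k + 1))) ≤ _ := hdesc k
      _ ≤ g (F (x k)) := h1
  have mono0 : ∀ k, g (F (x k)) ≤ g (F (x 0)) := by
    intro k
    induction k with
    | zero => exact le_refl _
    | succ k ih => exact (mono k).trans ih
  have hrange : Set.range x ⊆ {z ∈ D | g (F z) ≤ g (F (x 0))} := by
    rintro _ ⟨k, rfl⟩
    exact ⟨hxD k, mono0 k⟩
  refine ⟨hcpt.isBounded.subset hrange, ?_⟩
  have hle : Filter.map x Filter.atTop ≤ Filter.principal {z ∈ D | g (F z) ≤ g (F (x 0))} := by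
    rw [Filter.le_principal_iff]
    exact Filter.mem_map.mpr (Filter.univ_mem' fun k => hrange ⟨k, rfl⟩)
  obtain ⟨a, _, ha⟩ := hcpt.exists_clusterPt hle
  exact ⟨a, ha⟩
end

section
/- Let K > 0, let s ≤ r be integers with s ≥ 1, let (a_k) be a sequence of positive real numbers and (c_k) a sequence of real numbers such that for every k ∈ {s, …, r}: c_k ≤ c_{k−1} − K · a_{k+1}² / a_k. Then Σ_{k=s}^{r} a_k ≤ K^{−1}(c_{s−1} − c_r) + 2(a_s − a_{r+1}). -/
/-!
Since `(a² - b²)/a ≤ 2 (a - b)` for `a > 0`, each hypothesis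
`c_k ≤ c_{k-1} - K a_{k+1}²/a_k` yields the one-step bound
`a_k ≤ K⁻¹ (c_{k-1} - c_k) + 2 (a_k - a_{k+1})`; summing over `k` both right-hand terms telescope.
-/

theorem sq_sub_sq_div_le_two_mul_sub {a : ℝ} (ha : 0 < a) (b : ℝ) :
    (a ^ 2 - b ^ 2) / a ≤ 2 * (a - b) := by
  rw [div_le_iff₀ ha]
  nlinarith [sq_nonneg (a - b)]

theorem le_inv_mul_sub_add_two_mul_sub {K x y u v : ℝ} (hK : 0 < K) (hx : 0 < x)
    (h : u ≤ v - K * y ^ 2 / x) :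
    x ≤ K⁻¹ * (v - u) + 2 * (x - y) := by
  have hy : y ^ 2 / x ≤ K⁻¹ * (v - u) := by
    rw [inv_mul_eq_div, le_div_iff₀ hK]
    linarith [mul_div_assoc K (y ^ 2) x]
  have hx_split : x = (x ^ 2 - y ^ 2) / x + y ^ 2 / x := by
    field_simp
    ring
  linarith [sq_sub_sq_div_le_two_mul_sub hx y]

theorem sum_Icc_sub_succ {s r : ℕ} (hsr : s ≤ r) (f : ℕ → ℝ) :
    ∑ k ∈ Finset.Icc s r, (f k - f (k + 1)) = f s - f (r + 1) := by
  rw [← neg_sub, ← Finset.sum_Icc_sub hsr f, ← Finset.sum_neg_distrib]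
  simp only [neg_sub]

theorem sum_Icc_pred_sub {s r : ℕ} (hsr : s ≤ r) (f : ℕ → ℝ) :
    ∑ k ∈ Finset.Icc s r, (f (k - 1) - f k) = f (s - 1) - f r := by
  simpa using sum_Icc_sub_succ hsr (fun k ↦ f (k - 1))

theorem stmt_19_general (K : ℝ) (hK : 0 < K) (s r : ℕ) (hsr : s ≤ r)
    (a : ℕ → ℝ) (ha : ∀ k, 0 < a k) (c : ℕ → ℝ)
    (hrec : ∀ k, s ≤ k → k ≤ r → c k ≤ c (k - 1) - K * (a (k + 1)) ^ 2 / a k) :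
    ∑ k ∈ Finset.Icc s r, a k ≤ K⁻¹ * (c (s - 1) - c r) + 2 * (a s - a (r + 1)) := by
  calc ∑ k ∈ Finset.Icc s r, a k
      ≤ ∑ k ∈ Finset.Icc s r, (K⁻¹ * (c (k - 1) - c k) + 2 * (a k - a (k + 1))) := by
        refine Finset.sum_le_sum fun k hk ↦ ?_
        obtain ⟨hsk, hkr⟩ := Finset.mem_Icc.mp hk
        exact le_inv_mul_sub_add_two_mul_sub hK (ha k) (hrec k hsk hkr)
    _ = K⁻¹ * (c (s - 1) - c r) + 2 * (a s - a (r + 1)) := by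
        rw [Finset.sum_add_distrib, ← Finset.mul_sum, ← Finset.mul_sum,
          sum_Icc_pred_sub hsr, sum_Icc_sub_succ hsr]

/-- Finite-length estimate for abstract real sequences: if `K > 0`,
`1 ≤ s ≤ r`, `a_k > 0` and `c_k ≤ c_{k-1} - K a_{k+1}² / a_k` for `s ≤ k ≤ r`, then
`Σ_{k=s}^{r} a_k ≤ K⁻¹ (c_{s-1} - c_r) + 2 (a_s - a_{r+1})`. -/
theorem stmt_19 (K : ℝ) (hK : 0 < K) (s r : ℕ) (hs : 1 ≤ s) (hsr : s ≤ r)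
    (a : ℕ → ℝ) (ha : ∀ k, 0 < a k) (c : ℕ → ℝ)
    (hrec : ∀ k, s ≤ k → k ≤ r → c k ≤ c (k - 1) - K * (a (k + 1)) ^ 2 / a k) :
    ∑ k ∈ Finset.Icc s r, a k ≤ K⁻¹ * (c (s - 1) - c r) + 2 * (a s - a (r + 1)) :=
  stmt_19_general K hK s r hsr a ha c hrec
end
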